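/- arXiv:2511.10551 — 6 statements merged into one kernel-verified Lean document; each statement's English description precedes it below -/
import Mathlib

section
/- Let ρ : F₂ → Isom(X) be a group homomorphism from the free group on two generators to the isometry group of a geodesic δ-hyperbolic metric space X. Assume there exist constants C > 0 and D ≥ 0 such that l_S(ρ(γ)) ≥ ‖γ‖/C − D for every primitive element γ ∈ F₂. Then (i) l_S(ρ(γ)) > 0 for every primitive γ ∈ F₂ (i.e. ρ(γ) is hyperbolic), and (ii) for every K ≥ 0 the set of cyclically reduced primitive elements γ ∈ F₂ with l_S(ρ(γ)) ≤ K is finite. -/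
open Metric Filter Set Topology

/-- The Gromov product `(x|y)_z = ½(d(z,x)+d(z,y)−d(x,y))`. -/
noncomputable def gromovProd {X : Type*} [MetricSpace X] (x y z : X) : ℝ :=
  (dist z x + dist z y - dist x y) / 2

/-- A parametrized geodesic segment from `x` to `y` (defined on `[0, dist x y]`). -/
def IsGeodesicSegment {X : Type*} [MetricSpace X] (x y : X) (f : ℝ → X) : Prop :=
  f 0 = x ∧ f (dist x y) = y ∧
    ∀ s ∈ Set.Icc (0 : ℝ) (dist x y), ∀ t ∈ Set.Icc (0 : ℝ) (dist x y),
      dist (f s) (f t) = |s - t|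

/-- The metric space `X` is geodesic: any two points are joined by a geodesic segment. -/
def GeodesicMetricSpace (X : Type*) [MetricSpace X] : Prop :=
  ∀ x y : X, ∃ f : ℝ → X, IsGeodesicSegment x y f

/-- `X` is δ-hyperbolic in the sense of Rips: every geodesic triangle is δ-thin,
i.e. each side is contained in the δ-neighbourhood of the union of the other two. -/
def RipsHyperbolic (X : Type*) [MetricSpace X] (δ : ℝ) : Prop :=
  ∀ (x y z : X) (f g h : ℝ → X),
    IsGeodesicSegment x y f → IsGeodesicSegment y z g → IsGeodesicSegment z x h →
      ∀ s ∈ Set.Icc (0 : ℝ) (dist x y),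
        infDist (f s) (g '' Set.Icc 0 (dist y z) ∪ h '' Set.Icc 0 (dist z x)) ≤ δ

/-- A (parametrized) geodesic line in `X`. -/
def IsGeodesicLine {X : Type*} [MetricSpace X] (L : ℝ → X) : Prop :=
  ∀ s t : ℝ, dist (L s) (L t) = |s - t|

/-- A (parametrized) geodesic ray in `X` (parametrized on `[0,∞)`). -/
def IsGeodesicRay {X : Type*} [MetricSpace X] (r : ℝ → X) : Prop :=
  ∀ s t : ℝ, 0 ≤ s → 0 ≤ t → dist (r s) (r t) = |s - t|

/-- `L` is a geodesic from `A⁻` to `A⁺` (oriented toward `A⁺`): it is a geodesic line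
such that, with `x₀ = L 0`, the Gromov products `(Aⁿx₀ | L t)_{x₀}` tend to `+∞` as
`min(n,t) → +∞`, and `(A⁻ⁿx₀ | L (−t))_{x₀}` tend to `+∞` as `min(n,t) → +∞`. -/
def IsGeodesicFromTo {X : Type*} [MetricSpace X] (A : X ≃ᵢ X) (L : ℝ → X) : Prop :=
  IsGeodesicLine L ∧
    (∀ M : ℝ, ∃ N : ℝ, ∀ (n : ℕ) (t : ℝ), N ≤ (n : ℝ) → N ≤ t →
      M ≤ gromovProd ((A ^ n) (L 0)) (L t) (L 0)) ∧
    (∀ M : ℝ, ∃ N : ℝ, ∀ (n : ℕ) (t : ℝ), N ≤ (n : ℝ) → N ≤ t →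
      M ≤ gromovProd ((A⁻¹ ^ n) (L 0)) (L (-t)) (L 0))

/-- An element of `F₂` is primitive if it is the image of a generator under an
automorphism of `F₂` (equivalently, it belongs to some free basis). -/
def Primitive (γ : FreeGroup (Fin 2)) : Prop :=
  ∃ φ : FreeGroup (Fin 2) ≃* FreeGroup (Fin 2), φ (FreeGroup.of 0) = γ

/-- The (reduced) word length of an element of `F₂`. -/
noncomputable def wordLength (γ : FreeGroup (Fin 2)) : ℕ := γ.toWord.length

/-- The cyclically reduced word length `‖γ‖`: the minimum of the word lengths
of the conjugates of `γ`. -/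
noncomputable def cycLength (γ : FreeGroup (Fin 2)) : ℕ :=
  sInf (Set.range fun g : FreeGroup (Fin 2) => wordLength (g * γ * g⁻¹))

/-- `γ` is cyclically reduced if its word length equals its cyclically reduced length. -/
def CyclicallyReduced (γ : FreeGroup (Fin 2)) : Prop :=
  wordLength γ = cycLength γ

/-! If `γ = φ a` is primitive (`φ ∈ Aut F₂`, `F₂ = ⟨a, b⟩`), so is `γⁿ φ b` for every `n`, and the
character of `F₂` reading off the exponent of `φ a` shows that its cyclic length grows linearly in
`n`. The growth hypothesis, together with `l_S ≤ d(·x₀, x₀)` and the triangle inequality, then gives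
`d(ρ(γ)ⁿ x₀, x₀) ≥ n / (cC) − const`, hence `l_S(ρ γ) ≥ 1 / (cC) > 0`. Finiteness holds because a
cyclically reduced primitive `γ` with `l_S(ρ γ) ≤ K` has word length `‖γ‖ ≤ C (K + D)`. -/

namespace FreeGroup

variable {α G : Type*} [DecidableEq α]

theorem norm_apply_le_mul_norm [SeminormedGroup G] (χ : FreeGroup α →* G) {c : ℝ}
    (hc : ∀ a, ‖χ (of a)‖ ≤ c) (x : FreeGroup α) : ‖χ x‖ ≤ c * x.norm := by
  have hletter : ∀ y : α × Bool, ‖cond y.2 (χ (of y.1)) (χ (of y.1))⁻¹‖ ≤ c := by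
    rintro ⟨a, _ | _⟩ <;> simp [hc]
  have hword : ∀ L : List (α × Bool), ‖χ (mk L)‖ ≤ c * L.length := by
    intro L
    rw [lift_unique χ (f := fun a => χ (of a)) fun _ => rfl, lift_mk]
    induction L with
    | nil => simp
    | cons y L ih =>
      simp only [List.map_cons, List.prod_cons, List.length_cons]
      push_cast
      linarith [norm_mul_le' (cond y.2 (χ (of y.1)) (χ (of y.1))⁻¹)
        (L.map fun y => cond y.2 (χ (of y.1)) (χ (of y.1))⁻¹).prod, hletter y]
  calc ‖χ x‖ = ‖χ (mk x.toWord)‖ := by rw [mk_toWord]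
    _ ≤ c * x.norm := hword x.toWord

theorem finite_setOf_norm_le [Finite α] (N : ℕ) : {x : FreeGroup α | x.norm ≤ N}.Finite :=
  ((List.finite_length_le (α × Bool) N).preimage toWord_injective.injOn).subset fun _ h => h

end FreeGroup

open FreeGroup

theorem cycLength_mem_range (x : FreeGroup (Fin 2)) :
    cycLength x ∈ Set.range fun g : FreeGroup (Fin 2) => wordLength (g * x * g⁻¹) :=
  Nat.sInf_mem ⟨wordLength x, 1, by simp⟩

theorem norm_apply_le_mul_cycLength {G : Type*} [SeminormedCommGroup G]
    (χ : FreeGroup (Fin 2) →* G) {c : ℝ} (hc : ∀ a, ‖χ (of a)‖ ≤ c) (x : FreeGroup (Fin 2)) :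
    ‖χ x‖ ≤ c * cycLength x := by
  obtain ⟨g, hg⟩ := cycLength_mem_range x
  have hconj : χ (g * x * g⁻¹) = χ x := by simp [mul_comm]
  rw [← hg, ← hconj]
  exact norm_apply_le_mul_norm χ hc _

noncomputable def powMulAut (n : ℕ) : FreeGroup (Fin 2) ≃* FreeGroup (Fin 2) :=
  MonoidHom.toMulEquiv (lift ![of 0 ^ n * of 1, of 0]) (lift ![of 1, (of 1)⁻¹ ^ n * of 0])
    (ext_hom _ _ fun a => by fin_cases a <;> simp)
    (ext_hom _ _ fun a => by fin_cases a <;> simp)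

theorem primitive_pow_mul (φ : FreeGroup (Fin 2) ≃* FreeGroup (Fin 2)) (n : ℕ) :
    Primitive (φ (of 0) ^ n * φ (of 1)) :=
  ⟨(powMulAut n).trans φ, by simp [powMulAut]⟩

theorem exists_natCast_le_mul_cycLength (φ : FreeGroup (Fin 2) ≃* FreeGroup (Fin 2)) :
    ∃ c : ℝ, 0 < c ∧ ∀ n : ℕ, (n : ℝ) ≤ c * cycLength (φ (of 0) ^ n * φ (of 1)) := by
  set χ : FreeGroup (Fin 2) →* Multiplicative ℤ :=
    (lift ![Multiplicative.ofAdd 1, 1]).comp φ.symm.toMonoidHom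
  set c := ‖χ (of 0)‖ + ‖χ (of 1)‖ + 1
  have hc : ∀ a, ‖χ (of a)‖ ≤ c := by
    rw [Fin.forall_fin_two]
    constructor <;> linarith [norm_nonneg' (χ (of 0)), norm_nonneg' (χ (of 1))]
  refine ⟨c, by positivity, fun n => ?_⟩
  have hχ : χ (φ (of 0) ^ n * φ (of 1)) = Multiplicative.ofAdd (n : ℤ) := by
    simp [χ, ← ofAdd_nsmul]
  simpa [hχ] using norm_apply_le_mul_cycLength χ hc (φ (of 0) ^ n * φ (of 1))

theorem finite_setOf_primitive_cyclicallyReduced_le {lS : FreeGroup (Fin 2) → ℝ} {C D : ℝ}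
    (hC : 0 < C) (hgrowth : ∀ γ, Primitive γ → (cycLength γ : ℝ) / C - D ≤ lS γ) (K : ℝ) :
    {γ : FreeGroup (Fin 2) | Primitive γ ∧ CyclicallyReduced γ ∧ lS γ ≤ K}.Finite := by
  refine (finite_setOf_norm_le ⌈C * (K + D)⌉₊).subset ?_
  rintro γ ⟨hprim, hcr, hle⟩
  have hcyc : (cycLength γ : ℝ) ≤ C * (K + D) :=
    (div_le_iff₀' hC).1 (by linarith [hgrowth γ hprim])
  show wordLength γ ≤ _
  rw [hcr]
  exact Nat.cast_le.1 (hcyc.trans (Nat.le_ceil _))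

section StableNorm

variable {X : Type*} [PseudoMetricSpace X]

theorem IsometryEquiv.dist_mul_apply_le (A B : X ≃ᵢ X) (x : X) :
    dist ((A * B) x) x ≤ dist (A x) x + dist (B x) x :=
  calc dist (A (B x)) x ≤ dist (A (B x)) (A x) + dist (A x) x := dist_triangle _ _ _
    _ = dist (A x) x + dist (B x) x := by rw [A.dist_eq, add_comm]

theorem IsometryEquiv.dist_pow_apply_le (A : X ≃ᵢ X) (x : X) (n : ℕ) :
    dist ((A ^ n) x) x ≤ n * dist (A x) x := by
  induction n with
  | zero => simp
  | succ n ih =>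
    rw [pow_succ']
    push_cast
    linarith [A.dist_mul_apply_le (A ^ n) x]

def HasStableNorm (A : X ≃ᵢ X) (x : X) (L : ℝ) : Prop :=
  Tendsto (fun n : ℕ => dist ((A ^ n) x) x / n) atTop (𝓝 L)

variable {A : X ≃ᵢ X} {x : X} {L : ℝ}

theorem HasStableNorm.le_dist (h : HasStableNorm A x L) : L ≤ dist (A x) x := by
  refine le_of_tendsto h ?_
  filter_upwards [eventually_gt_atTop 0] with n hn
  rw [div_le_iff₀ (Nat.cast_pos.2 hn), mul_comm]
  exact A.dist_pow_apply_le x n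

theorem HasStableNorm.le_of_mul_sub_le (h : HasStableNorm A x L) {a b : ℝ}
    (hab : ∀ n : ℕ, a * n - b ≤ dist ((A ^ n) x) x) : a ≤ L := by
  have hlim : Tendsto (fun n : ℕ => a - b * (n : ℝ)⁻¹) atTop (𝓝 a) := by
    simpa using tendsto_const_nhds.sub (tendsto_inv_atTop_nhds_zero_nat.const_mul b)
  refine le_of_tendsto_of_tendsto hlim h ?_
  filter_upwards [eventually_gt_atTop 0] with n hn
  have hn' : (0 : ℝ) < n := Nat.cast_pos.2 hn
  rw [le_div_iff₀ hn']
  calc (a - b * (n : ℝ)⁻¹) * n = a * n - b := by field_simp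
    _ ≤ _ := hab n

theorem stableNorm_pos_of_primitive (ρ : FreeGroup (Fin 2) →* (X ≃ᵢ X)) {x₀ : X}
    {lS : FreeGroup (Fin 2) → ℝ} (hlS : ∀ γ, HasStableNorm (ρ γ) x₀ (lS γ)) {C D : ℝ}
    (hC : 0 < C) (hgrowth : ∀ γ, Primitive γ → (cycLength γ : ℝ) / C - D ≤ lS γ)
    {γ : FreeGroup (Fin 2)} (hγ : Primitive γ) : 0 < lS γ := by
  obtain ⟨φ, rfl⟩ := hγ
  obtain ⟨c, hc, hcyc⟩ := exists_natCast_le_mul_cycLength φ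
  set b := dist (ρ (φ (of 1)) x₀) x₀
  refine (by positivity : 0 < (c * C)⁻¹).trans_le
    ((hlS _).le_of_mul_sub_le (b := D + b) fun n => ?_)
  set w := φ (of 0) ^ n * φ (of 1)
  have hgrowth_w := hgrowth w (primitive_pow_mul φ n)
  have hlS_w := (hlS w).le_dist
  have htri : dist (ρ w x₀) x₀ ≤ dist ((ρ (φ (of 0)) ^ n) x₀) x₀ + b := by
    rw [_root_.map_mul, map_pow]
    exact (ρ (φ (of 0)) ^ n).dist_mul_apply_le (ρ (φ (of 1))) x₀
  have hlin : (c * C)⁻¹ * n ≤ cycLength w / C :=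
    calc (c * C)⁻¹ * n = n / c / C := by ring
      _ ≤ cycLength w / C := div_le_div_of_nonneg_right ((div_le_iff₀' hc).2 (hcyc n)) hC.le
  linarith

end StableNorm

theorem bowditch_growth_implies_hyperbolic_and_finite_general
    {X : Type*} [MetricSpace X]
    (ρ : FreeGroup (Fin 2) →* (X ≃ᵢ X)) (x₀ : X)
    (lS : FreeGroup (Fin 2) → ℝ)
    (hlS : ∀ γ : FreeGroup (Fin 2),
      Tendsto (fun n : ℕ => dist ((ρ γ ^ n) x₀) x₀ / n) atTop (𝓝 (lS γ)))
    (C D : ℝ) (hC : 0 < C)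
    (hgrowth : ∀ γ : FreeGroup (Fin 2), Primitive γ → (cycLength γ : ℝ) / C - D ≤ lS γ) :
    (∀ γ : FreeGroup (Fin 2), Primitive γ → 0 < lS γ) ∧
      (∀ K : ℝ, 0 ≤ K →
        {γ : FreeGroup (Fin 2) | Primitive γ ∧ CyclicallyReduced γ ∧ lS γ ≤ K}.Finite) :=
  ⟨fun _ hγ => stableNorm_pos_of_primitive ρ hlS hC hgrowth hγ,
    fun K _ => finite_setOf_primitive_cyclicallyReduced_le hC hgrowth K⟩

/-- If `l_S(ρ(γ)) ≥ ‖γ‖/C − D` for every primitive `γ ∈ F₂`, then every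
primitive element has hyperbolic image (`l_S > 0`), and for every `K ≥ 0` the set of
cyclically reduced primitive elements whose image has stable norm at most `K` is finite. -/
theorem bowditch_growth_implies_hyperbolic_and_finite
    {X : Type*} [MetricSpace X] (δ : ℝ) (hδ : 0 ≤ δ)
    (hgeo : GeodesicMetricSpace X) (hhyp : RipsHyperbolic X δ)
    (ρ : FreeGroup (Fin 2) →* (X ≃ᵢ X)) (x₀ : X)
    (lS : FreeGroup (Fin 2) → ℝ)
    (hlS : ∀ γ : FreeGroup (Fin 2),
      Tendsto (fun n : ℕ => dist ((ρ γ ^ n) x₀) x₀ / n) atTop (𝓝 (lS γ)))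
    (C D : ℝ) (hC : 0 < C) (hD : 0 ≤ D)
    (hgrowth : ∀ γ : FreeGroup (Fin 2), Primitive γ → (cycLength γ : ℝ) / C - D ≤ lS γ) :
    (∀ γ : FreeGroup (Fin 2), Primitive γ → 0 < lS γ) ∧
      (∀ K : ℝ, 0 ≤ K →
        {γ : FreeGroup (Fin 2) | Primitive γ ∧ CyclicallyReduced γ ∧ lS γ ≤ K}.Finite) :=
  bowditch_growth_implies_hyperbolic_and_finite_general ρ x₀ lS hlS C D hC hgrowth
end

section
/- Let X be a geodesic δ-hyperbolic metric space, let l : ℝ → X be a geodesic line, let t₀ ∈ ℝ and y₀ = l(t₀), and let r : [0,∞) → X be a geodesic ray with x₀ = r(0) such that there exists C ≥ 0 with dist(r(s), l([t₀,∞))) ≤ C for all s ≥ 0 (encoding that r is asymptotic to the positive end of l). Let x = r(s) for some s ≥ 0. Then: (i) if d(x, y₀) > d(y₀, x₀) + 2δ, there exists u ≥ t₀ with d(x, l(u)) ≤ 2δ; (ii) if moreover d(y₀, x) > 6δ, then every projection of x on l(ℝ) is of the form l(u) with u ≥ t₀. -/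
open Metric Filter Set Topology

/-- A geodesic segment has compact image on its parameter interval. -/
lemma segCompact {X : Type*} [MetricSpace X] {x y : X} {f : ℝ → X}
    (hf : IsGeodesicSegment x y f) :
    IsCompact (f '' Set.Icc 0 (dist x y)) ∧ (f '' Set.Icc 0 (dist x y)).Nonempty := by
  have hlip : LipschitzOnWith 1 f (Set.Icc 0 (dist x y)) := by
    rw [lipschitzOnWith_iff_dist_le_mul]
    intro a ha b hb
    rw [hf.2.2 a ha b hb, Real.dist_eq]
    simp
  exact ⟨isCompact_Icc.image_of_continuousOn hlip.continuousOn,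
    ⟨f 0, Set.mem_image_of_mem f ⟨le_refl 0, dist_nonneg⟩⟩⟩

lemma existsClose {X : Type*} [MetricSpace X] {K : Set X} (hK : IsCompact K)
    (hne : K.Nonempty) (p : X) {δ : ℝ} (h : infDist p K ≤ δ) :
    ∃ q ∈ K, dist p q ≤ δ := by
  obtain ⟨q, hq, hd⟩ := hK.exists_infDist_eq_dist hne p
  exact ⟨q, hq, hd ▸ h⟩

/-- Position of points and projections on asymptotic geodesics. Let `l` be a
geodesic line, `y₀ = l t₀`, and `r` a geodesic ray with `x₀ = r 0`, asymptotic to the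
positive end of `l` (encoded by `r(s)` staying within `C` of `l([t₀,∞))`). Let `x = r s`.
(i) If `d(x,y₀) > d(y₀,x₀) + 2δ` then there is `u ≥ t₀` with `d(x, l u) ≤ 2δ`.
(ii) If moreover `d(y₀,x) > 6δ`, every projection of `x` on `l` is `l u` with `u ≥ t₀`. -/
theorem projection_on_asymptotic_geodesic
    {X : Type*} [MetricSpace X] (δ : ℝ) (hδ : 0 ≤ δ)
    (hgeo : GeodesicMetricSpace X) (hhyp : RipsHyperbolic X δ)
    (l : ℝ → X) (hl : IsGeodesicLine l) (t₀ : ℝ)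
    (r : ℝ → X) (hr : IsGeodesicRay r)
    (C : ℝ) (hC : 0 ≤ C)
    (hasym : ∀ s : ℝ, 0 ≤ s → infDist (r s) (l '' Set.Ici t₀) ≤ C)
    (s : ℝ) (hs : 0 ≤ s) :
    (dist (r s) (l t₀) > dist (l t₀) (r 0) + 2 * δ →
      ∃ u : ℝ, t₀ ≤ u ∧ dist (r s) (l u) ≤ 2 * δ) ∧
    (dist (r s) (l t₀) > dist (l t₀) (r 0) + 2 * δ → dist (l t₀) (r s) > 6 * δ →
      ∀ z ∈ Set.range l, dist (r s) z = infDist (r s) (Set.range l) →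
        ∃ u : ℝ, t₀ ≤ u ∧ z = l u) := by
  have key : dist (r s) (l t₀) > dist (l t₀) (r 0) + 2 * δ →
      ∃ u : ℝ, t₀ ≤ u ∧ dist (r s) (l u) ≤ 2 * δ := by
    intro H
    set D := dist (r s) (l t₀) with hD
    set s' : ℝ := max s (dist (r 0) (l t₀) + C + D + 2 * δ + 2) with hs'def
    have hss' : s ≤ s' := le_max_left _ _
    have hs'big : dist (r 0) (l t₀) + C + D + 2 * δ + 2 ≤ s' := le_max_right _ _
    have hs'0 : 0 ≤ s' := le_trans hs hss'
    -- choose a point l u' close to r s'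
    have hne : (l '' Set.Ici t₀).Nonempty := ⟨l t₀, Set.mem_image_of_mem _ Set.self_mem_Ici⟩
    have h2 : infDist (r s') (l '' Set.Ici t₀) < C + 1 :=
      lt_of_le_of_lt (hasym s' hs'0) (by linarith)
    obtain ⟨y', hy'mem, hy'⟩ := (infDist_lt_iff hne).mp h2
    obtain ⟨u', hu't₀, rfl⟩ := hy'mem
    -- first triangle : r 0, r s', l t₀
    have hdist0s' : dist (r 0) (r s') = s' := by
      rw [hr 0 s' le_rfl hs'0, abs_of_nonpos (by linarith)]; ring
    have hfseg : IsGeodesicSegment (r 0) (r s') r := by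
      refine ⟨rfl, by rw [hdist0s'], ?_⟩
      intro a ha b hb
      exact hr a b ha.1 hb.1
    obtain ⟨g, hg⟩ := hgeo (r s') (l t₀)
    obtain ⟨h, hh⟩ := hgeo (l t₀) (r 0)
    have thin1 := hhyp (r 0) (r s') (l t₀) r g h hfseg hg hh s
      ⟨hs, by rw [hdist0s']; exact hss'⟩
    obtain ⟨Kg, Kgne⟩ := segCompact hg
    obtain ⟨Kh, Khne⟩ := segCompact hh
    obtain ⟨p, hpmem, hpd⟩ := existsClose (Kg.union Kh) (Kgne.mono Set.subset_union_left)
      (r s) thin1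
    rcases hpmem with hp | hp
    · -- p on side from r s' to l t₀
      obtain ⟨a, ha, rfl⟩ := hp
      -- second triangle : r s', l t₀, l u'
      have hu' : t₀ ≤ u' := hu't₀
      have hdtu : dist (l t₀) (l u') = u' - t₀ := by
        rw [hl t₀ u', abs_of_nonpos (by linarith)]; ring
      have hg₂ : IsGeodesicSegment (l t₀) (l u') (fun t => l (t₀ + t)) := by
        refine ⟨by simp, by rw [hdtu]; norm_num, ?_⟩
        intro a' _ b' _
        show dist (l (t₀ + a')) (l (t₀ + b')) = |a' - b'|
        rw [hl (t₀ + a') (t₀ + b')]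
        congr 1; ring
      obtain ⟨h₂, hh₂⟩ := hgeo (l u') (r s')
      have thin2 := hhyp (r s') (l t₀) (l u') g (fun t => l (t₀ + t)) h₂ hg hg₂ hh₂ a ha
      obtain ⟨Kg₂, Kg₂ne⟩ := segCompact hg₂
      obtain ⟨Kh₂, Kh₂ne⟩ := segCompact hh₂
      obtain ⟨q, hqmem, hqd⟩ := existsClose (Kg₂.union Kh₂) (Kg₂ne.mono Set.subset_union_left)
        (g a) thin2
      rcases hqmem with hq | hq
      · -- q on the line l : done
        obtain ⟨b, hb, rfl⟩ := hq
        refine ⟨t₀ + b, by linarith [hb.1], ?_⟩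
        calc dist (r s) (l (t₀ + b)) ≤ dist (r s) (g a) + dist (g a) (l (t₀ + b)) :=
              dist_triangle _ _ _
          _ ≤ 2 * δ := by linarith
      · -- q near r s' : contradiction with s' large
        exfalso
        obtain ⟨b, hb, rfl⟩ := hq
        have hq1 : dist (h₂ b) (r s') ≤ C + 1 := by
          have := hh₂.2.2 b hb (dist (l u') (r s')) ⟨dist_nonneg, le_rfl⟩
          rw [hh₂.2.1] at this
          rw [this, abs_of_nonpos (by linarith [hb.2])]
          have : dist (l u') (r s') = dist (r s') (l u') := dist_comm _ _
          linarith [hb.1]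
        -- upper bound on dist (h₂ b) (l t₀)
        have hup : dist (h₂ b) (l t₀) ≤ D + 2 * δ := by
          calc dist (h₂ b) (l t₀) ≤ dist (h₂ b) (g a) + dist (g a) (r s) + dist (r s) (l t₀) := by
                linarith [dist_triangle (h₂ b) (g a) (l t₀),
                  dist_triangle (g a) (r s) (l t₀)]
            _ ≤ D + 2 * δ := by
                rw [dist_comm (h₂ b) (g a), dist_comm (g a) (r s)]
                linarith
        -- lower bound
        have hlow : dist (r s') (l t₀) ≥ C + D + 2 * δ + 2 := by
          have := dist_triangle (r 0) (l t₀) (r s')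
          rw [hdist0s', dist_comm (l t₀) (r s')] at this
          linarith
        have := dist_triangle (r s') (h₂ b) (l t₀)
        rw [dist_comm (r s') (h₂ b)] at this
        linarith
    · -- p on side from l t₀ to r 0 : contradiction with H
      exfalso
      obtain ⟨a, ha, rfl⟩ := hp
      have hpa : dist (h a) (l t₀) ≤ dist (l t₀) (r 0) := by
        have := hh.2.2 a ha 0 ⟨le_rfl, dist_nonneg⟩
        rw [hh.1] at this
        rw [this, abs_of_nonneg (by linarith [ha.1])]
        linarith [ha.2]
      have := dist_triangle (r s) (h a) (l t₀)
      linarith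
  refine ⟨key, ?_⟩
  intro H H6 z hz hproj
  obtain ⟨u, rfl⟩ := hz
  obtain ⟨v, hv, hxv⟩ := key H
  refine ⟨u, ?_, rfl⟩
  by_contra hcon
  push_neg at hcon
  have hxz : dist (r s) (l u) ≤ 2 * δ := by
    rw [hproj]
    exact le_trans (infDist_le_dist_of_mem ⟨v, rfl⟩) hxv
  have huv : dist (l u) (l v) = v - u := by
    rw [hl u v, abs_of_nonpos (by linarith)]; ring
  have hut : dist (l t₀) (l u) = t₀ - u := by
    rw [hl t₀ u, abs_of_nonneg (by linarith)]
  have h1 := dist_triangle (l u) (r s) (l v)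
  rw [dist_comm (l u) (r s)] at h1
  have h2 := dist_triangle (l t₀) (l u) (r s)
  rw [dist_comm (l u) (r s)] at h2
  linarith
end

section
/- Let X be a geodesic δ-hyperbolic metric space and let l, l' : ℝ → X be geodesic lines such that there exists C ≥ 0 with dist(l(t), l'([0,∞))) ≤ C for all t ≥ 0 (encoding that l and l' share the same endpoint at +∞, both parametrizations tending to it as t → +∞). Then there exist a ∈ ℝ and T ∈ ℝ such that d(l(t), l'(t + a)) ≤ 6δ for all t ≥ T; i.e. l' admits a geodesic reparametrization that stays within 6δ of l for all sufficiently large times. -/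
open Metric Filter Set Topology

lemma line_seg {X : Type*} [MetricSpace X] {l' : ℝ → X} (hl' : IsGeodesicLine l')
    (a b : ℝ) (ha : 0 ≤ a) (hb : 0 ≤ b) :
    ∃ f : ℝ → X, IsGeodesicSegment (l' a) (l' b) f ∧
      f '' Set.Icc 0 (dist (l' a) (l' b)) ⊆ l' '' Set.Ici 0 := by
  have hd : dist (l' a) (l' b) = |a - b| := hl' a b
  rcases le_total a b with hab | hab
  · refine ⟨fun r => l' (a + r), ⟨by simp, ?_, ?_⟩, ?_⟩
    · rw [hd, abs_of_nonpos (by linarith)]; ring_nf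
    · intro s hs t ht
      rw [hl']; congr 1; ring
    · rintro p ⟨r, hr, rfl⟩
      exact ⟨a + r, by simp only [Set.mem_Ici]; linarith [hr.1], rfl⟩
  · refine ⟨fun r => l' (a - r), ⟨by simp, ?_, ?_⟩, ?_⟩
    · rw [hd, abs_of_nonneg (by linarith)]; ring_nf
    · intro s hs t ht
      rw [hl']
      rw [show a - s - (a - t) = -(s - t) by ring, abs_neg]
    · rintro p ⟨r, hr, rfl⟩
      refine ⟨a - r, ?_, rfl⟩
      simp only [Set.mem_Ici]
      have := hr.2
      rw [hd, abs_of_nonneg (by linarith)] at this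
      linarith

/-- helper: a point on a geodesic segment is within `dist x y` of the start. -/
lemma seg_dist_start {X : Type*} [MetricSpace X] {x y : X} {g : ℝ → X}
    (hg : IsGeodesicSegment x y g) {r : ℝ} (hr : r ∈ Set.Icc (0:ℝ) (dist x y)) :
    dist (g r) x ≤ dist x y := by
  have h0 : (0:ℝ) ∈ Set.Icc (0:ℝ) (dist x y) := ⟨le_refl _, dist_nonneg⟩
  have := hg.2.2 r hr 0 h0
  rw [hg.1] at this
  rw [this, sub_zero, abs_of_nonneg hr.1]
  exact hr.2

lemma step1 {X : Type*} [MetricSpace X] (δ : ℝ) (hδ : 0 ≤ δ)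
    (hgeo : GeodesicMetricSpace X) (hhyp : RipsHyperbolic X δ)
    (l l' : ℝ → X) (hl : IsGeodesicLine l) (hl' : IsGeodesicLine l')
    (C : ℝ) (hC : 0 ≤ C)
    (h : ∀ t : ℝ, 0 ≤ t → infDist (l t) (l' '' Set.Ici (0 : ℝ)) ≤ C)
    (ε : ℝ) (hε : 0 < ε) (u : ℝ) (hu : C + 2*δ + 2*ε + 2 ≤ u) :
    ∃ s : ℝ, 0 ≤ s ∧ dist (l u) (l' s) ≤ 2*δ + 2*ε := by
  have hu0 : 0 ≤ u := by linarith
  -- pick s₀ near l 0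
  have hne : (l' '' Set.Ici (0:ℝ)).Nonempty := ⟨l' 0, 0, Set.self_mem_Ici, rfl⟩
  obtain ⟨p₀, ⟨s₀, hs₀, rfl⟩, hps₀⟩ :=
    (Metric.infDist_lt_iff hne).1 (lt_of_le_of_lt (h 0 le_rfl) (by linarith : C < C + 1))
  -- pick t and s_t near l t
  set t : ℝ := u + (C + δ + ε + 2) with ht_def
  have ht0 : 0 ≤ t := by linarith
  obtain ⟨pt, ⟨st, hst, rfl⟩, hpst⟩ :=
    (Metric.infDist_lt_iff hne).1 (lt_of_le_of_lt (h t ht0) (by linarith : C < C + 1))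
  simp only [Set.mem_Ici] at hs₀ hst
  -- geodesics
  obtain ⟨g₁, hg₁⟩ := hgeo (l t) (l' st)
  obtain ⟨h₁, hh₁⟩ := hgeo (l' st) (l 0)
  obtain ⟨g₂, hg₂⟩ := hgeo (l 0) (l' s₀)
  obtain ⟨h₂, hh₂, hh₂im⟩ := line_seg hl' s₀ st hs₀ hst
  -- l restricted is a geodesic from l 0 to l t
  have hdt : dist (l 0) (l t) = t := by
    rw [hl 0 t, abs_of_nonpos (by linarith), neg_sub, sub_zero]
  have hf : IsGeodesicSegment (l 0) (l t) l := by
    refine ⟨rfl, by rw [hdt], fun s _ r _ => hl s r⟩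
  -- triangle 1
  have h1 := hhyp (l 0) (l t) (l' st) l g₁ h₁ hf hg₁ hh₁ u (by rw [hdt]; exact ⟨hu0, by linarith⟩)
  have hne1 : (g₁ '' Set.Icc 0 (dist (l t) (l' st)) ∪
      h₁ '' Set.Icc 0 (dist (l' st) (l 0))).Nonempty :=
    ⟨g₁ 0, Or.inl ⟨0, ⟨le_refl _, dist_nonneg⟩, rfl⟩⟩
  obtain ⟨p, hp, hdp⟩ := (Metric.infDist_lt_iff hne1).1
    (lt_of_le_of_lt h1 (by linarith : δ < δ + ε))
  rcases hp with ⟨r, hr, rfl⟩ | ⟨r, hr, rfl⟩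
  · -- p on the short side near l t : contradiction
    exfalso
    have h2 := seg_dist_start hg₁ hr
    have h3 : dist (l u) (l t) = t - u := by
      rw [hl u t, abs_of_nonpos (by linarith)]; ring
    have h4 : dist (l u) (l t) ≤ dist (l u) (g₁ r) + dist (g₁ r) (l t) := dist_triangle _ _ _
    have h5 : dist (l t) (l' st) < C + 1 := hpst
    rw [h3] at h4
    have := dist_comm (g₁ r) (l t)
    linarith [h2, h4, hdp]
  · -- p on diagonal: triangle 2
    have h2 := hhyp (l' st) (l 0) (l' s₀) h₁ g₂ h₂ hh₁ hg₂ hh₂ r hr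
    have hne2 : (g₂ '' Set.Icc 0 (dist (l 0) (l' s₀)) ∪
        h₂ '' Set.Icc 0 (dist (l' s₀) (l' st))).Nonempty :=
      ⟨g₂ 0, Or.inl ⟨0, ⟨le_refl _, dist_nonneg⟩, rfl⟩⟩
    obtain ⟨q, hq, hdq⟩ := (Metric.infDist_lt_iff hne2).1
      (lt_of_le_of_lt h2 (by linarith : δ < δ + ε))
    rcases hq with ⟨r', hr', rfl⟩ | hq
    · -- q near l 0 : contradiction
      exfalso
      have h3 := seg_dist_start hg₂ hr'
      have h4 : dist (l u) (l 0) = u := by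
        rw [hl u 0, sub_zero, abs_of_nonneg hu0]
      have h5 : dist (l u) (l 0) ≤ dist (l u) (h₁ r) + dist (h₁ r) (g₂ r') + dist (g₂ r') (l 0) :=
        dist_triangle4 _ _ _ _
      rw [h4] at h5
      linarith [h3, h5, hdp, hdq, hps₀]
    · -- q on l' : done
      obtain ⟨s, hs, rfl⟩ := hh₂im hq
      refine ⟨s, hs, ?_⟩
      calc dist (l u) (l' s) ≤ dist (l u) (h₁ r) + dist (h₁ r) (l' s) := dist_triangle _ _ _
        _ ≤ (δ + ε) + (δ + ε) := add_le_add hdp.le hdq.le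
        _ = 2*δ + 2*ε := by ring

/-- Asymptotic parametrization. If geodesic lines `l, l'` share the same
endpoint at `+∞` (encoded by `l(t)` staying within `C` of `l'([0,∞))` for `t ≥ 0`),
then `l'` admits a geodesic reparametrization (a shift by some `a ∈ ℝ`) that stays
within `6δ` of `l` for all sufficiently large times. -/
theorem asymptotic_geodesics_parametrization
    {X : Type*} [MetricSpace X] (δ : ℝ) (hδ : 0 ≤ δ)
    (hgeo : GeodesicMetricSpace X) (hhyp : RipsHyperbolic X δ)
    (l l' : ℝ → X) (hl : IsGeodesicLine l) (hl' : IsGeodesicLine l')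
    (C : ℝ) (hC : 0 ≤ C)
    (h : ∀ t : ℝ, 0 ≤ t → infDist (l t) (l' '' Set.Ici (0 : ℝ)) ≤ C) :
    ∃ a T : ℝ, ∀ t : ℝ, T ≤ t → dist (l t) (l' (t + a)) ≤ 6 * δ := by
  set u₀ : ℝ := C + 2*δ + 4 with hu₀_def
  have hu₀0 : 0 ≤ u₀ := by positivity
  set D : ℝ := dist (l u₀) (l' 0) with hD_def
  have hD0 : 0 ≤ D := dist_nonneg
  set B : ℝ := 2*δ + 2 + D + u₀ with hB_def
  set V : ℝ := u₀ + (2*δ + 2 + D) + 2*(2*δ + 2) + 1 with hV_def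
  -- step 2: for each n, a shift a with eventual bound 6δ + 6/(n+1)
  have key : ∀ n : ℕ, ∃ a : ℝ, a ∈ Set.Icc (-B) B ∧
      ∀ v : ℝ, V ≤ v → dist (l v) (l' (v + a)) ≤ 6*δ + 6 * (1/(n+1)) := by
    intro n
    set ε : ℝ := 1/(n+1) with hε_def
    have hε : 0 < ε := by positivity
    have hε1 : ε ≤ 1 := by
      rw [hε_def]
      rw [div_le_one (by positivity)]
      have : (0:ℝ) ≤ n := Nat.cast_nonneg n
      linarith
    set K : ℝ := 2*δ + 2*ε with hK_def
    have hK0 : 0 < K := by positivity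
    have hK1 : K ≤ 2*δ + 2 := by linarith
    obtain ⟨σ₀, hσ₀0, hσ₀d⟩ := step1 δ hδ hgeo hhyp l l' hl hl' C hC h ε hε u₀
      (by simp only [hu₀_def]; linarith)
    have hσ₀le : σ₀ ≤ D + K := by
      have h1 : dist (l' σ₀) (l' 0) = σ₀ := by
        rw [hl' σ₀ 0, sub_zero, abs_of_nonneg hσ₀0]
      have h2 : dist (l' σ₀) (l' 0) ≤ dist (l' σ₀) (l u₀) + dist (l u₀) (l' 0) :=
        dist_triangle _ _ _
      rw [h1, dist_comm (l' σ₀) (l u₀)] at h2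
      linarith
    refine ⟨σ₀ - u₀, ⟨by linarith, by linarith⟩, ?_⟩
    intro v hv
    have hvu₀ : u₀ + σ₀ + 2*K + 1 ≤ v := by
      have : σ₀ ≤ D + (2*δ + 2) := by linarith
      simp only [hV_def] at hv; linarith
    obtain ⟨σ, hσ0, hσd⟩ := step1 δ hδ hgeo hhyp l l' hl hl' C hC h ε hε v
      (by simp only [hu₀_def] at hvu₀ ⊢; linarith)
    -- distance along l
    have hdvu : dist (l v) (l u₀) = v - u₀ := by
      rw [hl v u₀, abs_of_nonneg (by linarith)]
    have hdσ : dist (l' σ) (l' σ₀) = |σ - σ₀| := hl' σ σ₀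
    -- lower and upper bounds on |σ - σ₀|
    have hlow : v - u₀ - 2*K ≤ |σ - σ₀| := by
      have := dist_triangle4 (l v) (l' σ) (l' σ₀) (l u₀)
      rw [hdvu] at this
      rw [← hdσ]
      have h3 : dist (l' σ₀) (l u₀) = dist (l u₀) (l' σ₀) := dist_comm _ _
      linarith [hσd, hσ₀d, this, h3 ▸ hσ₀d]
    have hhigh : |σ - σ₀| ≤ v - u₀ + 2*K := by
      rw [← hdσ]
      have := dist_triangle4 (l' σ) (l v) (l u₀) (l' σ₀)
      rw [dist_comm (l' σ) (l v), hdvu] at this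
      linarith [hσd, hσ₀d, this]
    -- σ > σ₀
    have hσσ₀ : σ₀ ≤ σ := by
      by_contra hcon
      push_neg at hcon
      have : |σ - σ₀| = σ₀ - σ := by rw [abs_of_neg (by linarith)]; ring
      rw [this] at hlow
      linarith
    have habs : |σ - σ₀| = σ - σ₀ := abs_of_nonneg (by linarith)
    rw [habs] at hlow hhigh
    -- conclude
    have h5 : dist (l' σ) (l' (v + (σ₀ - u₀))) = |σ - (v + (σ₀ - u₀))| := hl' _ _
    have h6 : |σ - (v + (σ₀ - u₀))| ≤ 2*K := by
      rw [abs_le]; constructor <;> linarith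
    calc dist (l v) (l' (v + (σ₀ - u₀)))
        ≤ dist (l v) (l' σ) + dist (l' σ) (l' (v + (σ₀ - u₀))) := dist_triangle _ _ _
      _ ≤ K + 2*K := by rw [h5]; exact add_le_add hσd h6
      _ = 6*δ + 6 * (1/(n+1)) := by rw [hK_def, hε_def]; ring
  -- step 3: extract a convergent subsequence of shifts
  choose A hA1 hA2 using key
  obtain ⟨a, -, φ, hφ, hconv⟩ :=
    tendsto_subseq_of_bounded (Metric.isBounded_Icc (-B) B) hA1
  refine ⟨a, V, fun v hv => ?_⟩
  refine le_of_forall_pos_le_add fun ε' hε' => ?_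
  -- choose n large
  have hev1 : ∀ᶠ n : ℕ in atTop, 6 * (1/((φ n : ℝ)+1)) ≤ ε'/2 := by
    have hten : Tendsto (fun n : ℕ => 6 * (1/((φ n : ℝ)+1))) atTop (𝓝 0) := by
      have h1 : Tendsto (fun n : ℕ => ((φ n : ℝ)+1)) atTop atTop := by
        apply tendsto_atTop_add_const_right
        exact tendsto_natCast_atTop_atTop.comp hφ.tendsto_atTop
      have := (tendsto_const_nhds.div_atTop h1 : Tendsto (fun n : ℕ => (1:ℝ)/((φ n : ℝ)+1)) atTop (𝓝 0))
      simpa using this.const_mul 6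
    exact hten.eventually (eventually_le_nhds (by linarith) : ∀ᶠ x in 𝓝 (0:ℝ), x ≤ ε'/2)
  have hev2 : ∀ᶠ n : ℕ in atTop, |A (φ n) - a| ≤ ε'/2 := by
    have : Tendsto (fun n => |A (φ n) - a|) atTop (𝓝 0) := by
      have := hconv.sub_const a
      simpa [Function.comp] using this.abs
    exact this.eventually (eventually_le_nhds (by linarith) : ∀ᶠ x in 𝓝 (0:ℝ), x ≤ ε'/2)
  obtain ⟨n, hn1, hn2⟩ := (hev1.and hev2).exists
  have hstep := hA2 (φ n) v hv
  have hshift : dist (l' (v + A (φ n))) (l' (v + a)) = |A (φ n) - a| := by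
    rw [hl' _ _]
    congr 1; ring
  calc dist (l v) (l' (v + a))
      ≤ dist (l v) (l' (v + A (φ n))) + dist (l' (v + A (φ n))) (l' (v + a)) :=
        dist_triangle _ _ _
    _ ≤ (6*δ + 6 * (1/((φ n : ℝ)+1))) + |A (φ n) - a| := by
        rw [hshift]; exact add_le_add hstep le_rfl
    _ ≤ 6*δ + ε' := by linarith
end

section
/- Let X be a geodesic δ-hyperbolic metric space, let l : ℝ → X be a geodesic line, let x ∈ X, let y be a point of l(ℝ), and let z be a projection of x on l(ℝ). Then d(x,y) ≥ d(x,z) + d(z,y) − 12δ. -/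
open Metric Filter Set Topology

/-- The image of a geodesic segment is compact. -/
lemma isGeodesicSegment_image_compact {X : Type*} [MetricSpace X] {x y : X} {f : ℝ → X}
    (h : IsGeodesicSegment x y f) : IsCompact (f '' Set.Icc 0 (dist x y)) := by
  apply IsCompact.image_of_continuousOn isCompact_Icc
  apply LipschitzOnWith.continuousOn (K := 1)
  apply LipschitzOnWith.of_dist_le_mul
  intro s hs t ht
  rw [h.2.2 s hs t ht, Real.dist_eq]
  simp

/-- Coarse right-angle inequality. If `z` is a projection of `x` on a
geodesic line `l` and `y` is any point of `l`, then `d(x,y) ≥ d(x,z) + d(z,y) − 12δ`. -/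
theorem projection_right_angle_inequality
    {X : Type*} [MetricSpace X] (δ : ℝ) (hδ : 0 ≤ δ)
    (hgeo : GeodesicMetricSpace X) (hhyp : RipsHyperbolic X δ)
    (l : ℝ → X) (hl : IsGeodesicLine l) (x : X)
    (y : X) (hy : y ∈ Set.range l)
    (z : X) (hz : z ∈ Set.range l) (hproj : dist x z = infDist x (Set.range l)) :
    dist x z + dist z y - 12 * δ ≤ dist x y := by
  -- `z` realizes the distance from `x` to the line, in particular `dist x z ≤ dist x y`.
  have hxz_le_xy : dist x z ≤ dist x y := by
    rw [hproj]; exact infDist_le_dist_of_mem hy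
  by_cases hA : dist z y ≤ 4 * δ
  · linarith
  push_neg at hA
  -- Main estimate, with an ε of slack.
  have key : ∀ ε : ℝ, 0 < ε → ε < dist z y - 2 * δ →
      dist x z + dist z y - (4 * δ + ε) ≤ dist x y := by
    intro ε hε hε'
    obtain ⟨a, ha⟩ := hz
    obtain ⟨b, hb⟩ := hy
    have hzy : dist z y = |a - b| := by rw [← ha, ← hb, hl a b]
    have hzy_pos : 0 < dist z y := by linarith
    have hab : a ≠ b := by
      intro h
      have : dist z y = 0 := by rw [hzy, h]; simp
      linarith
    -- The side of the triangle from `z` to `y`, running along `l`.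
    set σ : ℝ := if a ≤ b then 1 else -1 with hσdef
    have hσabs : |σ| = 1 := by
      rw [hσdef]; split_ifs <;> simp
    have hσmul : σ * |a - b| = b - a := by
      rw [hσdef]; split_ifs with h
      · rw [abs_of_nonpos (by linarith)]; ring
      · push_neg at h
        rw [abs_of_pos (by linarith)]; ring
    set F : ℝ → X := fun t => l (a + σ * t) with hFdef
    have hF : IsGeodesicSegment z y F := by
      refine ⟨by simp [hFdef, ha], ?_, ?_⟩
      · have : a + σ * dist z y = b := by rw [hzy, hσmul]; ring
        rw [hFdef]; simp only [this, hb]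
      · intro s hs t ht
        rw [hFdef]
        simp only
        rw [hl]
        have : a + σ * s - (a + σ * t) = σ * (s - t) := by ring
        rw [this, abs_mul, hσabs, one_mul]
    obtain ⟨G, hG⟩ := hgeo y x
    obtain ⟨H, hH⟩ := hgeo x z
    -- point at distance `2δ + ε` from `z` along the line
    set s : ℝ := 2 * δ + ε with hsdef
    have hs_mem : s ∈ Set.Icc (0 : ℝ) (dist z y) := ⟨by linarith, by linarith⟩
    have hthin := hhyp z y x F G H hF hG hH s hs_mem
    -- distances along `F`
    have hmz : dist (F s) z = s := by
      have := hF.2.2 s hs_mem 0 ⟨le_refl _, dist_nonneg⟩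
      rw [hF.1] at this
      rw [this, sub_zero, abs_of_nonneg (by linarith)]
    have hmy : dist (F s) y = dist z y - s := by
      have := hF.2.2 s hs_mem (dist z y) ⟨dist_nonneg, le_refl _⟩
      rw [hF.2.1] at this
      rw [this, abs_of_nonpos (by linarith)]; ring
    have hFs_mem : F s ∈ Set.range l := ⟨a + σ * s, rfl⟩
    have hxm : dist x z ≤ dist x (F s) := by
      rw [hproj]; exact infDist_le_dist_of_mem hFs_mem
    -- the union of the two other sides is compact and nonempty
    have hKc : IsCompact (G '' Set.Icc 0 (dist y x) ∪ H '' Set.Icc 0 (dist x z)) :=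
      (isGeodesicSegment_image_compact hG).union (isGeodesicSegment_image_compact hH)
    have hKne : (G '' Set.Icc 0 (dist y x) ∪ H '' Set.Icc 0 (dist x z)).Nonempty :=
      ⟨G 0, Or.inl ⟨0, ⟨le_refl _, dist_nonneg⟩, rfl⟩⟩
    obtain ⟨q, hqK, hq⟩ := hKc.exists_infDist_eq_dist hKne (F s)
    have hmq : dist (F s) q ≤ δ := by rw [← hq]; exact hthin
    rcases hqK with hqG | hqH
    · -- `q` is on the side from `y` to `x`
      obtain ⟨u, hu, rfl⟩ := hqG
      have hyq : dist y (G u) = u := by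
        have := hG.2.2 0 ⟨le_refl _, dist_nonneg⟩ u hu
        rw [hG.1] at this
        rw [this, abs_of_nonpos (by linarith [hu.1])]
        simp
      have hqx : dist (G u) x = dist y x - u := by
        have := hG.2.2 u hu (dist y x) ⟨dist_nonneg, le_refl _⟩
        rw [hG.2.1] at this
        rw [this, abs_of_nonpos (by linarith [hu.2])]; ring
      have h1 : dist x (F s) ≤ dist x (G u) + dist (G u) (F s) := dist_triangle _ _ _
      have h2 : dist (F s) y ≤ dist (F s) (G u) + dist (G u) y := dist_triangle _ _ _
      have hxy : dist x y = dist y x := dist_comm x y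
      have e1 : dist x (G u) = dist y x - u := by rw [dist_comm]; exact hqx
      have e2 : dist (G u) y = u := by rw [dist_comm]; exact hyq
      have e3 : dist (G u) (F s) = dist (F s) (G u) := dist_comm _ _
      rw [e1, e3] at h1
      rw [e2] at h2
      rw [hmy] at h2
      -- combine
      linarith
    · -- `q` is on the side from `x` to `z`: impossible since `s > 2δ`
      obtain ⟨u, hu, rfl⟩ := hqH
      have hxq : dist x (H u) = u := by
        have := hH.2.2 0 ⟨le_refl _, dist_nonneg⟩ u hu
        rw [hH.1] at this
        rw [this, abs_of_nonpos (by linarith [hu.1])]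
        simp
      have hqz : dist (H u) z = dist x z - u := by
        have := hH.2.2 u hu (dist x z) ⟨dist_nonneg, le_refl _⟩
        rw [hH.2.1] at this
        rw [this, abs_of_nonpos (by linarith [hu.2])]; ring
      have h1 : dist x (F s) ≤ dist x (H u) + dist (H u) (F s) := dist_triangle _ _ _
      have h2 : dist (F s) z ≤ dist (F s) (H u) + dist (H u) z := dist_triangle _ _ _
      have e3 : dist (H u) (F s) = dist (F s) (H u) := dist_comm _ _
      rw [hxq, e3] at h1
      rw [hqz] at h2
      rw [hmz] at h2
      -- `s ≤ 2δ`, contradiction with `s = 2δ + ε`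
      linarith
  -- let ε → 0
  have hmain : dist x z + dist z y - 4 * δ ≤ dist x y := by
    by_contra hc
    push_neg at hc
    set ε : ℝ := min ((dist z y - 2 * δ) / 2) ((dist x z + dist z y - 4 * δ - dist x y) / 2)
      with hεdef
    have h1 : 0 < ε := lt_min (by linarith) (by linarith)
    have h2 : ε < dist z y - 2 * δ :=
      lt_of_le_of_lt (min_le_left _ _) (by linarith)
    have h3 : ε ≤ (dist x z + dist z y - 4 * δ - dist x y) / 2 := min_le_right _ _
    have := key ε h1 h2
    linarith
  linarith
end

section
/- Let X be a geodesic δ-hyperbolic metric space, let A be a hyperbolic isometry of X, and let L : ℝ → X be a geodesic from A⁻ to A⁺. Then for every point x in the image of L, dist(A x, L(ℝ)) ≤ 2δ. -/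
open Metric Filter Set Topology

section Aux
variable {X : Type*} [MetricSpace X]

lemma gp_comm (x y z : X) : gromovProd x y z = gromovProd y x z := by
  unfold gromovProd; rw [dist_comm x y]; ring

lemma gp_le_dist (x y z : X) : gromovProd x y z ≤ dist z x := by
  unfold gromovProd
  have h := dist_triangle z x y
  have h2 : dist x y = dist y x := dist_comm x y
  have h3 := dist_triangle z x y
  nlinarith [dist_triangle z x y]

lemma gp_base (x y w w' : X) : gromovProd x y w - dist w w' ≤ gromovProd x y w' := by
  unfold gromovProd
  have h1 := dist_triangle w w' x
  have h2 := dist_triangle w w' y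
  linarith

lemma seg_rev {x y : X} {f : ℝ → X} (hf : IsGeodesicSegment x y f) :
    IsGeodesicSegment y x (fun t => f (dist x y - t)) := by
  obtain ⟨h0, h1, hiso⟩ := hf
  refine ⟨by simpa using h1, ?_, ?_⟩
  · show f (dist x y - dist y x) = x
    rw [dist_comm y x]; simpa using h0
  · intro s hs t ht
    rw [dist_comm y x] at hs ht
    show dist (f (dist x y - s)) (f (dist x y - t)) = |s - t|
    rw [hiso _ ⟨by linarith [hs.2], by linarith [hs.1]⟩ _ ⟨by linarith [ht.2], by linarith [ht.1]⟩,
      show dist x y - s - (dist x y - t) = -(s - t) by ring, abs_neg]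

lemma seg_map {x y : X} {f : ℝ → X} (C : X ≃ᵢ X) (hf : IsGeodesicSegment x y f) :
    IsGeodesicSegment (C x) (C y) (fun t => C (f t)) := by
  obtain ⟨h0, h1, hiso⟩ := hf
  have hd : dist (C x) (C y) = dist x y := C.dist_eq x y
  refine ⟨by simp [h0], ?_, ?_⟩
  · show C (f (dist (C x) (C y))) = C y
    rw [hd, h1]
  · intro s hs t ht
    rw [hd] at hs ht
    show dist (C (f s)) (C (f t)) = |s - t|
    rw [C.dist_eq, hiso s hs t ht]

lemma line_seg_fwd {ℓ : ℝ → X} (hℓ : IsGeodesicLine ℓ) {α β : ℝ} (hab : α ≤ β) :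
    IsGeodesicSegment (ℓ α) (ℓ β) (fun u => ℓ (α + u)) := by
  have hd : dist (ℓ α) (ℓ β) = β - α := by
    rw [hℓ, abs_of_nonpos (by linarith)]; ring
  refine ⟨by simp, ?_, ?_⟩
  · show ℓ (α + dist (ℓ α) (ℓ β)) = ℓ β
    rw [hd]; congr 1; ring
  · intro s _ t _
    show dist (ℓ (α + s)) (ℓ (α + t)) = |s - t|
    rw [hℓ]; congr 1; ring

lemma line_seg_bwd {ℓ : ℝ → X} (hℓ : IsGeodesicLine ℓ) {α β : ℝ} (hab : β ≤ α) :
    IsGeodesicSegment (ℓ α) (ℓ β) (fun u => ℓ (α - u)) := by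
  have hd : dist (ℓ α) (ℓ β) = α - β := by
    rw [hℓ, abs_of_nonneg (by linarith)]
  refine ⟨by simp, ?_, ?_⟩
  · show ℓ (α - dist (ℓ α) (ℓ β)) = ℓ β
    rw [hd]; congr 1; ring
  · intro s _ t _
    show dist (ℓ (α - s)) (ℓ (α - t)) = |s - t|
    rw [hℓ, show α - s - (α - t) = -(s - t) by ring, abs_neg]

lemma line_seg_if {ℓ : ℝ → X} (hℓ : IsGeodesicLine ℓ) (α β : ℝ) :
    IsGeodesicSegment (ℓ α) (ℓ β) (fun u => ℓ (α + if α ≤ β then u else -u)) := by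
  by_cases h : α ≤ β
  · simp only [if_pos h]; exact line_seg_fwd hℓ h
  · simp only [if_neg h]
    simp only [← sub_eq_add_neg]
    exact line_seg_bwd hℓ (le_of_lt (lt_of_not_ge h))

lemma thin_point {δ : ℝ} (hhyp : RipsHyperbolic X δ) {x y z : X} {f g h : ℝ → X}
    (hf : IsGeodesicSegment x y f) (hg : IsGeodesicSegment y z g) (hh : IsGeodesicSegment z x h)
    {s : ℝ} (hs : s ∈ Set.Icc 0 (dist x y)) {ε : ℝ} (hε : 0 < ε) :
    ∃ q, (q ∈ g '' Set.Icc 0 (dist y z) ∨ q ∈ h '' Set.Icc 0 (dist z x)) ∧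
      dist (f s) q < δ + ε := by
  have h1 := hhyp x y z f g h hf hg hh s hs
  have hne : (g '' Set.Icc 0 (dist y z) ∪ h '' Set.Icc 0 (dist z x)).Nonempty :=
    ⟨g 0, Or.inl ⟨0, ⟨le_refl 0, dist_nonneg⟩, rfl⟩⟩
  have h2 : infDist (f s) (g '' Set.Icc 0 (dist y z) ∪ h '' Set.Icc 0 (dist z x)) < δ + ε :=
    lt_of_le_of_lt h1 (by linarith)
  rw [Metric.infDist_lt_iff hne] at h2
  obtain ⟨q, hq, hdq⟩ := h2
  exact ⟨q, hq, hdq⟩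

lemma ft {δ : ℝ} (hδ : 0 ≤ δ) (hgeo : GeodesicMetricSpace X) (hhyp : RipsHyperbolic X δ)
    {x y z : X} {f k : ℝ → X} (hf : IsGeodesicSegment x y f) (hk : IsGeodesicSegment x z k)
    {s : ℝ} (hs0 : 0 ≤ s) (hsy : s ≤ dist x y) (hsgp : s + δ < gromovProd y z x) :
    dist (f s) (k s) ≤ 2 * δ := by
  have hG : gromovProd y z x = (dist x y + dist x z - dist y z) / 2 := rfl
  have hgpz : gromovProd y z x ≤ dist x z := by
    rw [hG]; linarith [dist_triangle x z y, dist_comm z y]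
  have hsz : s ≤ dist x z := by linarith
  obtain ⟨g, hg⟩ := hgeo y z
  have hh := seg_rev hk
  have hxfs : dist x (f s) = s := by
    have h2 := hf.2.2 0 ⟨le_rfl, dist_nonneg⟩ s ⟨hs0, hsy⟩
    rw [hf.1] at h2
    rw [h2, zero_sub, abs_neg, abs_of_nonneg hs0]
  apply le_of_forall_pos_le_add
  intro ε hε
  have hε₀pos : 0 < min (ε / 2) ((gromovProd y z x - s - δ) / 2) :=
    lt_min (by linarith) (by linarith)
  set ε₀ := min (ε / 2) ((gromovProd y z x - s - δ) / 2) with hε₀def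
  have hε₀half : ε₀ ≤ ε / 2 := min_le_left _ _
  have hε₀gp : ε₀ ≤ (gromovProd y z x - s - δ) / 2 := min_le_right _ _
  obtain ⟨q, hq, hdq⟩ := thin_point hhyp hf hg hh ⟨hs0, hsy⟩ hε₀pos
  rcases hq with hq | hq
  · exfalso
    obtain ⟨u, hu, hqe⟩ := hq
    have hyq : dist y (g u) = u := by
      have h2 := hg.2.2 0 ⟨le_rfl, dist_nonneg⟩ u hu
      rw [hg.1] at h2
      rw [h2, zero_sub, abs_neg, abs_of_nonneg hu.1]
    have hqz : dist (g u) z = dist y z - u := by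
      have h2 := hg.2.2 u hu (dist y z) ⟨dist_nonneg, le_rfl⟩
      rw [hg.2.1] at h2
      rw [h2, abs_of_nonpos (by linarith [hu.2])]; ring
    have t1 : dist x y ≤ dist x (g u) + u := by
      calc dist x y ≤ dist x (g u) + dist (g u) y := dist_triangle _ _ _
        _ = dist x (g u) + u := by rw [dist_comm (g u) y, hyq]
    have t2 : dist x z ≤ dist x (g u) + (dist y z - u) := by
      rw [← hqz]; exact dist_triangle x (g u) z
    have t3 : dist x (g u) ≤ dist x (f s) + dist (f s) (g u) := dist_triangle _ _ _
    rw [hxfs] at t3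
    rw [← hqe] at hdq
    linarith [hdq.le]
  · obtain ⟨u, hu, hqe⟩ := hq
    have hqe' : k (dist x z - u) = q := hqe
    rw [dist_comm z x] at hu
    set w := dist x z - u with hwdef
    have hw : w ∈ Set.Icc 0 (dist x z) := ⟨by simp [hwdef]; linarith [hu.2], by simp [hwdef]; linarith [hu.1]⟩
    have hxq : dist x (k w) = w := by
      have h2 := hk.2.2 0 ⟨le_rfl, dist_nonneg⟩ w hw
      rw [hk.1] at h2
      rw [h2, zero_sub, abs_neg, abs_of_nonneg hw.1]
    have habs : |dist (f s) x - dist (k w) x| ≤ dist (f s) (k w) := abs_dist_sub_le _ _ _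
    rw [dist_comm (f s) x, dist_comm (k w) x, hxfs, hxq] at habs
    rw [← hqe'] at hdq
    have hkk : dist (k w) (k s) = |w - s| := hk.2.2 w hw s ⟨hs0, hsz⟩
    have h5 : dist (f s) (k s) ≤ dist (f s) (k w) + dist (k w) (k s) := dist_triangle _ _ _
    have h6 : |w - s| ≤ δ + ε₀ := by
      rw [abs_sub_comm]
      exact le_trans habs hdq.le
    rw [hkk] at h5
    linarith [hdq.le, abs_nonneg (w - s)]

end Aux

section Chain
variable {X : Type*} [MetricSpace X]

lemma chain {δ : ℝ} (hδ : 0 ≤ δ) (hgeo : GeodesicMetricSpace X) (hhyp : RipsHyperbolic X δ)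
    {ℓ : ℝ → X} (hℓ : IsGeodesicLine ℓ) (C : X ≃ᵢ X)
    (HH : ∀ M r₀ : ℝ, ∃ (y : X) (t t' : ℝ), r₀ ≤ t ∧ r₀ ≤ t' ∧
      M ≤ gromovProd y (ℓ t) (ℓ 0) ∧ M ≤ gromovProd (C y) (ℓ t') (ℓ 0)) :
    ∀ r : ℝ, 0 ≤ r →
      ∃ q : ℝ, dist (C (ℓ r)) (ℓ q) ≤ 6 * δ + 3 * dist (ℓ 0) (C (ℓ 0)) + 1 := by
  intro r hr
  set c := dist (ℓ 0) (C (ℓ 0)) with hc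
  have hc0 : 0 ≤ c := dist_nonneg
  by_cases hsmall : r ≤ 2 * c + δ + 1
  · refine ⟨0, ?_⟩
    have h1 : dist (C (ℓ r)) (ℓ 0) ≤ dist (C (ℓ r)) (C (ℓ 0)) + dist (C (ℓ 0)) (ℓ 0) :=
      dist_triangle _ _ _
    rw [C.dist_eq, hℓ r 0, sub_zero, abs_of_nonneg hr, dist_comm (C (ℓ 0)) (ℓ 0), ← hc] at h1
    linarith
  · push_neg at hsmall
    obtain ⟨y, t, t', ht, ht', hgp1, hgp2⟩ := HH (r + c + δ + 1) (r + c + 1)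
    have h0t : (0:ℝ) ≤ t := by linarith
    have h0t' : (0:ℝ) ≤ t' := by linarith
    have hd0t : dist (ℓ 0) (ℓ t) = t := by
      rw [hℓ, zero_sub, abs_neg, abs_of_nonneg h0t]
    have hd0t' : dist (ℓ 0) (ℓ t') = t' := by
      rw [hℓ, zero_sub, abs_neg, abs_of_nonneg h0t']
    -- Step 1: ℓ r is 2δ-close to k1 r, k1 a geodesic from ℓ 0 to y
    obtain ⟨k1, hk1⟩ := hgeo (ℓ 0) y
    have hf1 := line_seg_fwd hℓ (show (0:ℝ) ≤ t by linarith)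
    have hgp1' : r + δ < gromovProd (ℓ t) y (ℓ 0) := by
      rw [gp_comm]; linarith
    have step1 : dist (ℓ (0 + r)) (k1 r) ≤ 2 * δ :=
      ft hδ hgeo hhyp hf1 hk1 hr (by rw [hd0t]; linarith) hgp1'
    rw [zero_add] at step1
    have hry : r ≤ dist (ℓ 0) y := by
      have := gp_le_dist y (ℓ t) (ℓ 0); linarith
    -- Step 2: apply C
    have hCk1 := seg_map C hk1
    -- Step 3: C (k1 r) is 2δ-close to k3 r, k3 a geodesic from C (ℓ 0) to ℓ t'
    obtain ⟨k3, hk3⟩ := hgeo (C (ℓ 0)) (ℓ t')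
    have hgp2' : r + δ < gromovProd (C y) (ℓ t') (C (ℓ 0)) := by
      have := gp_base (C y) (ℓ t') (ℓ 0) (C (ℓ 0)); linarith
    have step3 : dist (C (k1 r)) (k3 r) ≤ 2 * δ :=
      ft hδ hgeo hhyp hCk1 hk3 hr (by rw [C.dist_eq]; exact hry) hgp2'
    have hrD : r ≤ dist (C (ℓ 0)) (ℓ t') := by
      have h8 := gp_le_dist (ℓ t') (C y) (C (ℓ 0))
      rw [gp_comm] at h8; linarith
    -- Step 4: k3 r is 2δ-close to the line ℓ
    set D := dist (C (ℓ 0)) (ℓ t') with hD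
    have hDle : D ≤ c + t' := by
      calc D ≤ dist (C (ℓ 0)) (ℓ 0) + dist (ℓ 0) (ℓ t') := dist_triangle _ _ _
        _ = c + t' := by rw [dist_comm (C (ℓ 0)) (ℓ 0), ← hc, hd0t']
    have hDge : t' - c ≤ D := by
      have h9 : dist (ℓ 0) (ℓ t') ≤ dist (ℓ 0) (C (ℓ 0)) + D := dist_triangle _ _ _
      rw [hd0t'] at h9; linarith
    have hrev := seg_rev hk3
    have hk4 := line_seg_bwd hℓ (show (0:ℝ) ≤ t' by linarith)
    have hgp4 : (D - r) + δ < gromovProd (C (ℓ 0)) (ℓ 0) (ℓ t') := by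
      have hGdef : gromovProd (C (ℓ 0)) (ℓ 0) (ℓ t')
          = (dist (ℓ t') (C (ℓ 0)) + dist (ℓ t') (ℓ 0) - dist (C (ℓ 0)) (ℓ 0)) / 2 := rfl
      rw [hGdef, dist_comm (ℓ t') (C (ℓ 0)), ← hD, dist_comm (ℓ t') (ℓ 0), hd0t',
        dist_comm (C (ℓ 0)) (ℓ 0), ← hc]
      linarith
    have hDr0 : 0 ≤ D - r := by linarith
    have hDrle : D - r ≤ dist (ℓ t') (C (ℓ 0)) := by
      rw [dist_comm, ← hD]; linarith
    have step4 : dist (k3 (D - (D - r))) (ℓ (t' - (D - r))) ≤ 2 * δ :=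
      ft hδ hgeo hhyp hrev hk4 hDr0 hDrle hgp4
    rw [show D - (D - r) = r by ring] at step4
    refine ⟨t' - (D - r), ?_⟩
    have htri : dist (C (ℓ r)) (ℓ (t' - (D - r))) ≤
        dist (C (ℓ r)) (C (k1 r)) + dist (C (k1 r)) (k3 r) + dist (k3 r) (ℓ (t' - (D - r))) :=
      dist_triangle4 _ _ _ _
    rw [C.dist_eq] at htri
    linarith

end Chain


section Anchor
variable {X : Type*} [MetricSpace X]

lemma anchor {δ : ℝ} (hδ : 0 ≤ δ) (hgeo : GeodesicMetricSpace X) (hhyp : RipsHyperbolic X δ)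
    (A : X ≃ᵢ X) {L : ℝ → X} (hL : IsGeodesicFromTo A L) :
    ∀ ρ : ℝ, ∃ q : ℝ, dist (A (L ρ)) (L q) ≤ 6 * δ + 3 * dist (L 0) (A (L 0)) + 1 := by
  obtain ⟨hline, hfwd, hbwd⟩ := hL
  intro ρ
  rcases le_or_gt 0 ρ with hρ | hρ
  · -- forward direction
    have HH : ∀ M r₀ : ℝ, ∃ (y : X) (t t' : ℝ), r₀ ≤ t ∧ r₀ ≤ t' ∧
        M ≤ gromovProd y (L t) (L 0) ∧ M ≤ gromovProd (A y) (L t') (L 0) := by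
      intro M r₀
      obtain ⟨N, hN⟩ := hfwd M
      refine ⟨(A ^ ⌈N⌉₊) (L 0), max N r₀, max N r₀, le_max_right _ _, le_max_right _ _, ?_, ?_⟩
      · exact hN ⌈N⌉₊ _ (Nat.le_ceil N) (le_max_left _ _)
      · have hA : A ((A ^ ⌈N⌉₊) (L 0)) = (A ^ (⌈N⌉₊ + 1)) (L 0) := by
          rw [pow_succ', IsometryEquiv.mul_apply]
        rw [hA]
        exact hN (⌈N⌉₊ + 1) _ (by push_cast; linarith [Nat.le_ceil N]) (le_max_left _ _)
    exact chain hδ hgeo hhyp hline A HH ρ hρ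
  · -- backward direction, use the line t ↦ L (-t)
    have hline' : IsGeodesicLine (fun u => L (-u)) := by
      intro a b
      show dist (L (-a)) (L (-b)) = |a - b|
      rw [hline, show -a - -b = -(a - b) by ring, abs_neg]
    have hHH : ∀ M r₀ : ℝ, ∃ (y : X) (t t' : ℝ), r₀ ≤ t ∧ r₀ ≤ t' ∧
        M ≤ gromovProd y ((fun u => L (-u)) t) ((fun u => L (-u)) 0) ∧
        M ≤ gromovProd (A y) ((fun u => L (-u)) t') ((fun u => L (-u)) 0) := by
      intro M r₀
      obtain ⟨N, hN⟩ := hbwd M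
      refine ⟨(A⁻¹ ^ (⌈N⌉₊ + 1)) (L 0), max N r₀, max N r₀, le_max_right _ _,
        le_max_right _ _, ?_, ?_⟩
      · show M ≤ gromovProd ((A⁻¹ ^ (⌈N⌉₊ + 1)) (L 0)) (L (-(max N r₀))) (L (-0))
        rw [neg_zero]
        exact hN (⌈N⌉₊ + 1) _ (by push_cast; linarith [Nat.le_ceil N]) (le_max_left _ _)
      · show M ≤ gromovProd (A ((A⁻¹ ^ (⌈N⌉₊ + 1)) (L 0))) (L (-(max N r₀))) (L (-0))
        have hA : A ((A⁻¹ ^ (⌈N⌉₊ + 1)) (L 0)) = (A⁻¹ ^ ⌈N⌉₊) (L 0) := by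
          rw [← IsometryEquiv.mul_apply, show A * A⁻¹ ^ (⌈N⌉₊ + 1) = A⁻¹ ^ ⌈N⌉₊ by group]
        rw [hA, neg_zero]
        exact hN ⌈N⌉₊ _ (Nat.le_ceil N) (le_max_left _ _)
    have hres := chain hδ hgeo hhyp hline' A hHH (-ρ) (by linarith)
    obtain ⟨q, hq⟩ := hres
    have hq' : dist (A (L (-(-ρ)))) (L (-q)) ≤ 6 * δ + 3 * dist (L (-0)) (A (L (-0))) + 1 := hq
    rw [neg_neg, neg_zero] at hq'
    exact ⟨-q, hq'⟩

end Anchor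

/-- Quasi-invariance of the axis. If `A` is a hyperbolic isometry and `L`
is a geodesic from `A⁻` to `A⁺`, then for every point `x` on `L`, the image `A x` is
within `2δ` of `L`. -/
theorem axis_quasi_invariant
    {X : Type*} [MetricSpace X] (δ : ℝ) (hδ : 0 ≤ δ)
    (hgeo : GeodesicMetricSpace X) (hhyp : RipsHyperbolic X δ)
    (A : X ≃ᵢ X) (x₀ : X) (lA : ℝ)
    (hlA : Tendsto (fun n : ℕ => dist ((A ^ n) x₀) x₀ / n) atTop (𝓝 lA))
    (hAhyp : 0 < lA)
    (L : ℝ → X) (hL : IsGeodesicFromTo A L) :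
    ∀ x ∈ Set.range L, infDist (A x) (Set.range L) ≤ 2 * δ := by
  rintro x ⟨s, rfl⟩
  have hline : IsGeodesicLine L := hL.1
  set c := dist (L 0) (A (L 0)) with hc
  have hc0 : 0 ≤ c := dist_nonneg
  set K := 6 * δ + 3 * c + 1 with hK
  have hK0 : 0 < K := by rw [hK]; linarith
  set R := K + 2 * δ + 3 with hR
  have hR0 : 0 < R := by rw [hR]; linarith
  obtain ⟨q₁, hq₁⟩ := anchor hδ hgeo hhyp A hL (s - R)
  obtain ⟨q₂, hq₂⟩ := anchor hδ hgeo hhyp A hL (s + R)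
  rw [← hc, ← hK] at hq₁ hq₂
  have hmu : dist (A (L s)) (A (L (s - R))) = R := by
    rw [A.dist_eq, hline, show s - (s - R) = R by ring, abs_of_nonneg hR0.le]
  have hmv : dist (A (L s)) (A (L (s + R))) = R := by
    rw [A.dist_eq, hline, show s - (s + R) = -R by ring, abs_neg, abs_of_nonneg hR0.le]
  have hduv : dist (A (L (s - R))) (A (L (s + R))) = 2 * R := by
    rw [A.dist_eq, hline, show s - R - (s + R) = -(2 * R) by ring, abs_neg,
      abs_of_nonneg (by linarith)]
  have hline' : IsGeodesicLine (fun u => A (L u)) := by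
    intro a b
    show dist (A (L a)) (A (L b)) = |a - b|
    rw [A.dist_eq, hline]
  have hf1 : IsGeodesicSegment (A (L (s - R))) (A (L (s + R)))
      (fun u => A (L (s - R + u))) :=
    line_seg_fwd hline' (show s - R ≤ s + R by linarith)
  obtain ⟨g1, hg1⟩ := hgeo (A (L (s + R))) (L q₂)
  obtain ⟨guc, hguc⟩ := hgeo (A (L (s - R))) (L q₂)
  have hhuc := seg_rev hguc
  apply le_of_forall_pos_le_add
  intro ε hε
  have hε₁pos : 0 < min (ε / 2) 1 := lt_min (by linarith) one_pos
  set ε₁ := min (ε / 2) 1 with hε₁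
  have hε₁half : ε₁ ≤ ε / 2 := min_le_left _ _
  have hε₁one : ε₁ ≤ 1 := min_le_right _ _
  obtain ⟨w, hw, hdw⟩ :=
    thin_point hhyp hf1 hg1 hhuc ⟨hR0.le, by rw [hduv]; linarith⟩ hε₁pos
  have hdw' : dist (A (L s)) w < δ + ε₁ := by
    have h0 : dist (A (L (s - R + R))) w < δ + ε₁ := hdw
    rw [show s - R + R = s by ring] at h0
    exact h0
  rcases hw with hw | hw
  · -- w on the side from v to L q₂ : impossible
    exfalso
    obtain ⟨τ, hτ, hwq⟩ := hw
    have hvw : dist (A (L (s + R))) w = τ := by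
      rw [← hwq, ← hg1.1]
      rw [hg1.2.2 0 ⟨le_rfl, dist_nonneg⟩ τ hτ, zero_sub, abs_neg, abs_of_nonneg hτ.1]
    have hτK : τ ≤ K := le_trans hτ.2 hq₂
    have htri : dist (A (L s)) (A (L (s + R))) ≤
        dist (A (L s)) w + dist w (A (L (s + R))) := dist_triangle _ _ _
    rw [hmv, dist_comm w _, hvw] at htri
    linarith [hdw', hR]
  · -- w on the side from L q₂ to u
    obtain ⟨τ, hτ, hwq⟩ := hw
    have hwq' : guc (dist (A (L (s - R))) (L q₂) - τ) = w := hwq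
    rw [dist_comm (L q₂) (A (L (s - R)))] at hτ
    set σ := dist (A (L (s - R))) (L q₂) - τ with hσdef
    have hσ : σ ∈ Set.Icc 0 (dist (A (L (s - R))) (L q₂)) :=
      ⟨by rw [hσdef]; linarith [hτ.2], by rw [hσdef]; linarith [hτ.1]⟩
    obtain ⟨h2f, hh2⟩ := hgeo (L q₁) (A (L (s - R)))
    obtain ⟨p, hp, hdp⟩ := thin_point hhyp hguc (line_seg_if hline q₂ q₁) hh2 hσ hε₁pos
    rw [hwq'] at hdp
    rcases hp with hp | hp
    · -- p on the line L : done
      obtain ⟨τ₂, hτ₂, hpe⟩ := hp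
      have hpL : p ∈ Set.range L := ⟨q₂ + if q₂ ≤ q₁ then τ₂ else -τ₂, hpe⟩
      have hinf : infDist (A (L s)) (Set.range L) ≤ dist (A (L s)) p :=
        infDist_le_dist_of_mem hpL
      have htr : dist (A (L s)) p ≤ dist (A (L s)) w + dist w p := dist_triangle _ _ _
      linarith [hdw', hdp]
    · -- p on the side from L q₁ to u : impossible
      exfalso
      obtain ⟨τ₂, hτ₂, hpe⟩ := hp
      have hup : dist p (A (L (s - R))) ≤ dist (L q₁) (A (L (s - R))) := by
        rw [← hpe]
        nth_rewrite 1 [← hh2.2.1]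
        rw [dist_comm (h2f τ₂) (h2f (dist (L q₁) (A (L (s - R)))))]
        rw [hh2.2.2 _ ⟨dist_nonneg, le_rfl⟩ τ₂ hτ₂]
        rw [abs_of_nonneg (by linarith [hτ₂.2])]
        linarith [hτ₂.1]
      have hq₁' : dist (L q₁) (A (L (s - R))) ≤ K := by
        rw [dist_comm]; exact hq₁
      have htri2 : dist (A (L s)) (A (L (s - R))) ≤
          dist (A (L s)) p + dist p (A (L (s - R))) := dist_triangle _ _ _
      have htri3 : dist (A (L s)) p ≤ dist (A (L s)) w + dist w p := dist_triangle _ _ _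
      rw [hmu] at htri2
      linarith [hdw', hdp, hR]
end

section
/- Let X be a geodesic δ-hyperbolic metric space, let A be a hyperbolic isometry of X with l_S(A) > 6δ, and let L : ℝ → X be a geodesic from A⁻ to A⁺. Let x = L(t) for some t ∈ ℝ and let z be a projection of A x on L(ℝ). Then z = L(s) for some s ≥ t (the projection of A x lies on the half of L from x toward A⁺). -/
open Metric Filter Set Topology

section Aux
variable {X : Type*} [MetricSpace X]

theorem gromovProd_comm (a b c : X) : gromovProd a b c = gromovProd b a c := by
  unfold gromovProd; rw [dist_comm a b]; ring

theorem gromovProd_le_add_dist (a a' b w : X) :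
    gromovProd a b w ≤ gromovProd a' b w + dist a a' := by
  unfold gromovProd
  have h1 : dist w a ≤ dist w a' + dist a' a := dist_triangle _ _ _
  have h2 : dist a' b ≤ dist a' a + dist a b := dist_triangle _ _ _
  have := dist_comm a a'
  linarith

theorem gromovProd_base_change (a b w w' : X) :
    gromovProd a b w' - dist w w' ≤ gromovProd a b w := by
  unfold gromovProd
  have h1 : dist w' a ≤ dist w' w + dist w a := dist_triangle _ _ _
  have h2 : dist w' b ≤ dist w' w + dist w b := dist_triangle _ _ _
  have := dist_comm w w'
  linarith

theorem gromovProd_isom (e : X ≃ᵢ X) (a b c : X) :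
    gromovProd (e a) (e b) (e c) = gromovProd a b c := by
  unfold gromovProd; rw [e.dist_eq, e.dist_eq, e.dist_eq]

theorem seg_dist_left {a b : X} {f : ℝ → X} (hf : IsGeodesicSegment a b f)
    {r : ℝ} (hr : r ∈ Set.Icc (0:ℝ) (dist a b)) :
    dist a (f r) = r ∧ dist b (f r) = dist a b - r := by
  obtain ⟨h0, h1, hd⟩ := hf
  constructor
  · have := hd 0 ⟨le_refl _, dist_nonneg⟩ r hr
    rw [h0] at this
    rw [this, abs_sub_comm, sub_zero, abs_of_nonneg hr.1]
  · have := hd (dist a b) ⟨dist_nonneg, le_refl _⟩ r hr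
    rw [h1] at this
    rw [this, abs_of_nonneg (by linarith [hr.2])]

theorem gromov_le_dist_of_mem_seg {a b : X} {f : ℝ → X} (hf : IsGeodesicSegment a b f)
    {ξ : X} (hξ : ξ ∈ f '' Set.Icc 0 (dist a b)) (w : X) :
    gromovProd a b w ≤ dist w ξ := by
  obtain ⟨r, hr, rfl⟩ := hξ
  obtain ⟨e1, e2⟩ := seg_dist_left hf hr
  have h1 : dist w a ≤ dist w (f r) + dist (f r) a := dist_triangle _ _ _
  have h2 : dist w b ≤ dist w (f r) + dist (f r) b := dist_triangle _ _ _
  rw [dist_comm (f r) a] at h1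
  rw [dist_comm (f r) b] at h2
  unfold gromovProd
  linarith

theorem line_seg_s9 {L : ℝ → X} (hL : IsGeodesicLine L) {u v : ℝ} (huv : u ≤ v) :
    IsGeodesicSegment (L u) (L v) (fun ρ => L (u + ρ)) := by
  have hd : dist (L u) (L v) = v - u := by rw [hL u v, abs_of_nonpos (by linarith)]; ring
  refine ⟨by simp, ?_, ?_⟩
  · rw [hd]; simp
  · intro s _ t _
    have he : u + s - (u + t) = s - t := by ring
    rw [hL, he]

theorem extract_near {p : X} {S : Set X} (hS : S.Nonempty) {δ ε : ℝ} (hε : 0 < ε)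
    (h : infDist p S ≤ δ) : ∃ q ∈ S, dist p q < δ + ε :=
  (infDist_lt_iff hS).1 (by linarith)

end Aux

section Hyp
variable {X : Type*} [MetricSpace X]

/-- The hyperbolic inequality for Gromov products, with constant `3δ`,
derived from Rips-thinness. -/
theorem gromov_hyp {δ : ℝ} (hgeo : GeodesicMetricSpace X) (hhyp : RipsHyperbolic X δ)
    (a b c w : X) :
    min (gromovProd b c w) (gromovProd c a w) ≤ gromovProd a b w + 3 * δ := by
  refine le_of_forall_pos_le_add fun ε hε => ?_
  obtain ⟨f, hf⟩ := hgeo a b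
  obtain ⟨g₁, hg₁⟩ := hgeo b w
  obtain ⟨h₁, hh₁⟩ := hgeo w a
  obtain ⟨g₂, hg₂⟩ := hgeo b c
  obtain ⟨h₂, hh₂⟩ := hgeo c a
  set r₀ := gromovProd b w a with hr₀
  have hr₀v : r₀ = (dist a b + dist a w - dist b w) / 2 := rfl
  have cwb : dist w b = dist b w := dist_comm w b
  have cwa : dist w a = dist a w := dist_comm w a
  have cba : dist b a = dist a b := dist_comm b a
  have hr₀mem : r₀ ∈ Set.Icc (0:ℝ) (dist a b) := by
    simp only [Set.mem_Icc]
    have t1 := dist_triangle b a w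
    have t2 := dist_triangle a b w
    constructor <;> (rw [hr₀v]; linarith)
  set m := f r₀ with hm
  have hma : dist a m = r₀ := (seg_dist_left hf hr₀mem).1
  have hmb : dist b m = dist a b - r₀ := (seg_dist_left hf hr₀mem).2
  have hε3 : (0:ℝ) < ε/3 := by linarith
  have T1 := hhyp a b w f g₁ h₁ hf hg₁ hh₁ r₀ hr₀mem
  have hne1 : (g₁ '' Set.Icc 0 (dist b w) ∪ h₁ '' Set.Icc 0 (dist w a)).Nonempty :=
    ⟨g₁ 0, Or.inl ⟨0, ⟨le_refl _, dist_nonneg⟩, rfl⟩⟩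
  obtain ⟨m₂, hm₂mem, hm₂⟩ := extract_near hne1 hε3 T1
  have key : dist w m₂ ≤ gromovProd a b w + δ + ε/3 := by
    have gv : gromovProd a b w = (dist w a + dist w b - dist a b) / 2 := rfl
    rcases hm₂mem with hmem | hmem
    · obtain ⟨ρ, hρ, rfl⟩ := hmem
      obtain ⟨e1, e2⟩ := seg_dist_left hg₁ hρ
      have hb : dist b m ≤ dist b (g₁ ρ) + dist (g₁ ρ) m := dist_triangle _ _ _
      have hflip : dist (g₁ ρ) m = dist m (g₁ ρ) := dist_comm _ _
      have e2' : dist w (g₁ ρ) = dist b w - ρ := by rw [← cwb]; rw [cwb]; exact e2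
      rw [gv, e2']
      linarith
    · obtain ⟨ρ, hρ, rfl⟩ := hmem
      obtain ⟨e1, e2⟩ := seg_dist_left hh₁ hρ
      have ha : dist a m ≤ dist a (h₁ ρ) + dist (h₁ ρ) m := dist_triangle _ _ _
      have hflip : dist (h₁ ρ) m = dist m (h₁ ρ) := dist_comm _ _
      rw [gv, e1]
      linarith
  have T2 := hhyp a b c f g₂ h₂ hf hg₂ hh₂ r₀ hr₀mem
  have hne2 : (g₂ '' Set.Icc 0 (dist b c) ∪ h₂ '' Set.Icc 0 (dist c a)).Nonempty :=
    ⟨g₂ 0, Or.inl ⟨0, ⟨le_refl _, dist_nonneg⟩, rfl⟩⟩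
  obtain ⟨m₃, hm₃mem, hm₃⟩ := extract_near hne2 hε3 T2
  have key2 : min (gromovProd b c w) (gromovProd c a w) ≤ dist w m₃ := by
    rcases hm₃mem with hmem | hmem
    · exact le_trans (min_le_left _ _) (gromov_le_dist_of_mem_seg hg₂ hmem w)
    · exact le_trans (min_le_right _ _) (gromov_le_dist_of_mem_seg hh₂ hmem w)
  have c1 := dist_triangle w m m₃
  have c2 := dist_triangle w m₂ m
  have c3 : dist m₂ m = dist m m₂ := dist_comm _ _
  linarith

end Hyp

section Close
variable {X : Type*} [MetricSpace X]

/-- Core lemma: a geodesic line `M` with the same endpoints at infinity as `L`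
(detected by Gromov products with the orbit of `A`) stays within `2δ` of `L`. -/
theorem close_to_line {δ : ℝ} (hδ : 0 ≤ δ)
    (hgeo : GeodesicMetricSpace X) (hhyp : RipsHyperbolic X δ)
    (A : X ≃ᵢ X) (L M : ℝ → X)
    (hLl : IsGeodesicLine L) (hMl : IsGeodesicLine M)
    (hLf : ∀ Mo : ℝ, ∃ N : ℝ, ∀ (m : ℕ) (u : ℝ), N ≤ (m : ℝ) → N ≤ u →
      Mo ≤ gromovProd ((A ^ m) (L 0)) (L u) (L 0))
    (hLb : ∀ Mo : ℝ, ∃ N : ℝ, ∀ (m : ℕ) (u : ℝ), N ≤ (m : ℝ) → N ≤ u →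
      Mo ≤ gromovProd ((A⁻¹ ^ m) (L 0)) (L (-u)) (L 0))
    (hMf : ∀ Mo : ℝ, ∃ N : ℝ, ∀ (m : ℕ) (u : ℝ), N ≤ (m : ℝ) → N ≤ u →
      Mo ≤ gromovProd ((A ^ m) (L 0)) (M u) (L 0))
    (hMb : ∀ Mo : ℝ, ∃ N : ℝ, ∀ (m : ℕ) (u : ℝ), N ≤ (m : ℝ) → N ≤ u →
      Mo ≤ gromovProd ((A⁻¹ ^ m) (L 0)) (M (-u)) (L 0))
    (τ : ℝ) {ε : ℝ} (hε : 0 < ε) :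
    ∃ σ : ℝ, dist (M τ) (L σ) ≤ 2 * δ + ε := by
  set x₀ := L 0 with hx₀
  set C₀ := dist x₀ (M τ) with hC₀
  set T := C₀ + 2 * δ + ε + 1 with hT
  obtain ⟨N₁, hN₁⟩ := hLf (T + 3 * δ)
  obtain ⟨N₂, hN₂⟩ := hMf (T + 3 * δ)
  obtain ⟨N₃, hN₃⟩ := hLb (T + 3 * δ)
  obtain ⟨N₄, hN₄⟩ := hMb (T + 3 * δ)
  set q := max (max N₁ N₂) 0 with hq
  set w := max (max (max N₁ N₂) 0) (|τ| + 1) with hw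
  set mp : ℕ := ⌈max (max N₁ N₂) 0⌉₊ with hmp
  set r := max (max N₃ N₄) 0 with hr
  set v := max (max (max N₃ N₄) 0) (|τ| + 1) with hv
  set mm : ℕ := ⌈max (max N₃ N₄) 0⌉₊ with hmm
  have hmpR : max (max N₁ N₂) 0 ≤ (mp : ℝ) := Nat.le_ceil _
  have hmmR : max (max N₃ N₄) 0 ≤ (mm : ℝ) := Nat.le_ceil _
  have hq0 : 0 ≤ q := le_max_right _ _
  have hr0 : 0 ≤ r := le_max_right _ _
  have hwτ : |τ| + 1 ≤ w := le_max_right _ _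
  have hvτ : |τ| + 1 ≤ v := le_max_right _ _
  have hτabs : -|τ| ≤ τ ∧ τ ≤ |τ| := ⟨neg_abs_le τ, le_abs_self τ⟩
  -- the two Gromov product bounds
  have hSQ : T ≤ gromovProd (L q) (M w) x₀ := by
    have h1 : T + 3 * δ ≤ gromovProd ((A ^ mp) x₀) (L q) x₀ :=
      hN₁ mp q (le_trans (le_trans (le_max_left _ _) (le_max_left _ _)) hmpR)
        (le_trans (le_max_left _ _) (le_max_left _ _))
    have h2 : T + 3 * δ ≤ gromovProd ((A ^ mp) x₀) (M w) x₀ :=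
      hN₂ mp w (le_trans (le_trans (le_max_right _ _) (le_max_left _ _)) hmpR)
        (le_trans (le_max_right _ _) (le_trans (le_max_left _ _) (le_max_left _ _)))
    have hmin := gromov_hyp hgeo hhyp (L q) (M w) ((A ^ mp) x₀) x₀
    rw [gromovProd_comm (M w) ((A ^ mp) x₀) x₀] at hmin
    have := le_min h2 h1
    linarith [le_trans this hmin]
  have hRP : T ≤ gromovProd (L (-r)) (M (-v)) x₀ := by
    have h1 : T + 3 * δ ≤ gromovProd ((A⁻¹ ^ mm) x₀) (L (-r)) x₀ :=
      hN₃ mm r (le_trans (le_trans (le_max_left _ _) (le_max_left _ _)) hmmR)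
        (le_trans (le_max_left _ _) (le_max_left _ _))
    have h2 : T + 3 * δ ≤ gromovProd ((A⁻¹ ^ mm) x₀) (M (-v)) x₀ :=
      hN₄ mm v (le_trans (le_trans (le_max_right _ _) (le_max_left _ _)) hmmR)
        (le_trans (le_max_right _ _) (le_trans (le_max_left _ _) (le_max_left _ _)))
    have hmin := gromov_hyp hgeo hhyp (L (-r)) (M (-v)) ((A⁻¹ ^ mm) x₀) x₀
    rw [gromovProd_comm (M (-v)) ((A⁻¹ ^ mm) x₀) x₀] at hmin
    have := le_min h2 h1
    linarith [le_trans this hmin]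
  -- triangle 1 : vertices M(-v), M w, L(-r)
  have hvw : -v ≤ w := by
    have h1 : (0:ℝ) ≤ v := le_trans (by positivity) hvτ
    have h2 : (0:ℝ) ≤ w := le_trans (by positivity) hwτ
    linarith
  have hf : IsGeodesicSegment (M (-v)) (M w) (fun ρ => M (-v + ρ)) := line_seg_s9 hMl hvw
  obtain ⟨gQR, hgQR⟩ := hgeo (M w) (L (-r))
  obtain ⟨hRPseg, hhRPseg⟩ := hgeo (L (-r)) (M (-v))
  have hdPQ : dist (M (-v)) (M w) = v + w := by
    rw [hMl]
    rw [abs_of_nonpos (by linarith)]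
    ring
  have hmem1 : v + τ ∈ Set.Icc (0:ℝ) (dist (M (-v)) (M w)) := by
    rw [hdPQ]
    constructor
    · linarith [hτabs.1, hvτ]
    · linarith [hτabs.2, hwτ]
  have T1 := hhyp (M (-v)) (M w) (L (-r)) _ gQR hRPseg hf hgQR hhRPseg (v + τ) hmem1
  have hfv : M (-v + (v + τ)) = M τ := by
    congr 1
    ring
  rw [hfv] at T1
  have hη : (0:ℝ) < ε / 2 := by linarith
  have hne1 : (gQR '' Set.Icc 0 (dist (M w) (L (-r))) ∪
      hRPseg '' Set.Icc 0 (dist (L (-r)) (M (-v)))).Nonempty :=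
    ⟨gQR 0, Or.inl ⟨0, ⟨le_refl _, dist_nonneg⟩, rfl⟩⟩
  obtain ⟨m, hmmem, hmd⟩ := extract_near hne1 hη T1
  -- rule out the side [L(-r), M(-v)]
  have hmQR : m ∈ gQR '' Set.Icc 0 (dist (M w) (L (-r))) := by
    rcases hmmem with hmem | hmem
    · exact hmem
    · exfalso
      have h1 : gromovProd (L (-r)) (M (-v)) x₀ ≤ dist x₀ m :=
        gromov_le_dist_of_mem_seg hhRPseg hmem x₀
      have h2 : dist x₀ m ≤ dist x₀ (M τ) + dist (M τ) m := dist_triangle _ _ _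
      linarith
  obtain ⟨θ, hθ, rfl⟩ := hmQR
  -- triangle 2 : vertices M w, L (-r), L q
  have hrq : -r ≤ q := by linarith
  have hgRS : IsGeodesicSegment (L (-r)) (L q) (fun ρ => L (-r + ρ)) := line_seg_s9 hLl hrq
  obtain ⟨h₂seg, hh₂seg⟩ := hgeo (L q) (M w)
  have T2 := hhyp (M w) (L (-r)) (L q) gQR _ h₂seg hgQR hgRS hh₂seg θ hθ
  have hne2 : ((fun ρ => L (-r + ρ)) '' Set.Icc 0 (dist (L (-r)) (L q)) ∪
      h₂seg '' Set.Icc 0 (dist (L q) (M w))).Nonempty :=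
    ⟨L (-r + 0), Or.inl ⟨0, ⟨le_refl _, dist_nonneg⟩, rfl⟩⟩
  obtain ⟨m', hm'mem, hm'd⟩ := extract_near hne2 hη T2
  have hm'L : m' ∈ (fun ρ => L (-r + ρ)) '' Set.Icc 0 (dist (L (-r)) (L q)) := by
    rcases hm'mem with hmem | hmem
    · exact hmem
    · exfalso
      have h1 : gromovProd (L q) (M w) x₀ ≤ dist x₀ m' :=
        gromov_le_dist_of_mem_seg hh₂seg hmem x₀
      have h2 : dist x₀ m' ≤ dist x₀ (M τ) + dist (M τ) (gQR θ) + dist (gQR θ) m' := by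
        have a1 := dist_triangle x₀ (gQR θ) m'
        have a2 := dist_triangle x₀ (M τ) (gQR θ)
        linarith
      linarith
  obtain ⟨ρ', hρ', rfl⟩ := hm'L
  refine ⟨-r + ρ', ?_⟩
  have := dist_triangle (M τ) (gQR θ) (L (-r + ρ'))
  linarith

end Close

section Stable
variable {X : Type*} [MetricSpace X]

theorem stable_norm_le (A : X ≃ᵢ X) (x₀ w : X) {lA : ℝ}
    (hlA : Filter.Tendsto (fun n : ℕ => dist ((A ^ n) x₀) x₀ / n) Filter.atTop (nhds lA)) :
    lA ≤ dist (A w) w ∧ 2 * lA ≤ dist (A (A w)) w := by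
  have key : ∀ (u v : X) (n : ℕ), dist ((A ^ n) u) u ≤ dist ((A ^ n) v) v + 2 * dist u v := by
    intro u v n
    have t1 := dist_triangle ((A ^ n) u) ((A ^ n) v) u
    have t2 := dist_triangle ((A ^ n) v) v u
    have e1 : dist ((A ^ n) u) ((A ^ n) v) = dist u v := (A ^ n).dist_eq u v
    have e2 : dist v u = dist u v := dist_comm v u
    linarith
  have hsub : ∀ (B : X ≃ᵢ X) (u : X) (n : ℕ), dist ((B ^ n) u) u ≤ n * dist (B u) u := by
    intro B u n
    induction n with
    | zero => simp
    | succ n ih =>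
      have e0 : (B ^ (n+1)) u = (B ^ n) (B u) := by rw [pow_succ]; rfl
      have t1 : dist ((B ^ (n+1)) u) u ≤ dist ((B ^ n) (B u)) ((B ^ n) u) + dist ((B ^ n) u) u := by
        rw [e0]; exact dist_triangle _ _ _
      have e1 : dist ((B ^ n) (B u)) ((B ^ n) u) = dist (B u) u := (B ^ n).dist_eq _ _
      push_cast
      linarith
  have hlim_w : Filter.Tendsto (fun n : ℕ => dist ((A ^ n) w) w / n) Filter.atTop (nhds lA) := by
    have hlow : Filter.Tendsto
        (fun n : ℕ => (dist ((A ^ n) x₀) x₀ - 2 * dist w x₀) / n) Filter.atTop (nhds lA) := by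
      have := hlA.sub (tendsto_const_div_atTop_nhds_zero_nat (2 * dist w x₀))
      simp only [sub_zero] at this
      convert this using 2 with n
      rw [sub_div]
    have hhigh : Filter.Tendsto
        (fun n : ℕ => (dist ((A ^ n) x₀) x₀ + 2 * dist w x₀) / n) Filter.atTop (nhds lA) := by
      have := hlA.add (tendsto_const_div_atTop_nhds_zero_nat (2 * dist w x₀))
      simp only [add_zero] at this
      convert this using 2 with n
      rw [add_div]
    refine tendsto_of_tendsto_of_tendsto_of_le_of_le' hlow hhigh ?_ ?_
    · filter_upwards [Filter.eventually_gt_atTop 0] with n hn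
      have hn' : (0:ℝ) < n := by exact_mod_cast hn
      have h1 : dist ((A ^ n) x₀) x₀ - 2 * dist w x₀ ≤ dist ((A ^ n) w) w := by
        have := key x₀ w n
        have e := dist_comm x₀ w
        linarith
      exact (div_le_div_iff_of_pos_right hn').2 h1
    · filter_upwards [Filter.eventually_gt_atTop 0] with n hn
      have hn' : (0:ℝ) < n := by exact_mod_cast hn
      have h1 : dist ((A ^ n) w) w ≤ dist ((A ^ n) x₀) x₀ + 2 * dist w x₀ := key w x₀ n
      exact (div_le_div_iff_of_pos_right hn').2 h1
  constructor
  · refine le_of_tendsto hlim_w ?_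
    filter_upwards [Filter.eventually_gt_atTop 0] with n hn
    have hn' : (0:ℝ) < n := by exact_mod_cast hn
    rw [div_le_iff₀ hn']
    have := hsub A w n
    have e : dist (A w) w * n = n * dist (A w) w := by ring
    rw [e]
    exact this
  · have h2n : Filter.Tendsto (fun n : ℕ => 2 * n) Filter.atTop Filter.atTop :=
      Filter.tendsto_atTop_atTop.2 fun b => ⟨b, fun a ha => by omega⟩
    have htwo : Filter.Tendsto (fun n : ℕ => dist ((A ^ (2 * n)) w) w / (2 * n : ℕ))
        Filter.atTop (nhds lA) := hlim_w.comp h2n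
    have hfin : lA ≤ dist (A (A w)) w / 2 := by
      refine le_of_tendsto htwo ?_
      filter_upwards [Filter.eventually_gt_atTop 0] with n hn
      have hn' : (0:ℝ) < n := by exact_mod_cast hn
      have hbound : dist ((A ^ (2 * n)) w) w ≤ n * dist (A (A w)) w := by
        have e1 : (A ^ (2 * n)) = (A ^ 2) ^ n := by rw [pow_mul]
        have e2 : (A ^ 2) w = A (A w) := by rw [pow_two]; rfl
        have := hsub (A ^ 2) w n
        rw [e2] at this
        rw [e1]
        exact this
      have hc : ((2 * n : ℕ) : ℝ) = 2 * (n : ℝ) := by push_cast; ring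
      rw [hc, div_le_iff₀ (by linarith)]
      have e : dist (A (A w)) w / 2 * (2 * n) = n * dist (A (A w)) w := by ring
      rw [e]
      exact hbound
    linarith

end Stable

/-- If `A` is a hyperbolic isometry with `l_S(A) > 6δ` and `L` is a geodesic
from `A⁻` to `A⁺`, then for `x = L t`, any projection of `A x` on `L` is of the form
`L s` with `s ≥ t` (it lies on the half of `L` from `x` toward `A⁺`). -/
theorem projection_of_image_forward
    {X : Type*} [MetricSpace X] (δ : ℝ) (hδ : 0 ≤ δ)
    (hgeo : GeodesicMetricSpace X) (hhyp : RipsHyperbolic X δ)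
    (A : X ≃ᵢ X) (x₀ : X) (lA : ℝ)
    (hlA : Tendsto (fun n : ℕ => dist ((A ^ n) x₀) x₀ / n) atTop (𝓝 lA))
    (hlA6 : 6 * δ < lA)
    (L : ℝ → X) (hL : IsGeodesicFromTo A L)
    (t : ℝ) (z : X) (hz : z ∈ Set.range L)
    (hproj : dist (A (L t)) z = infDist (A (L t)) (Set.range L)) :
    ∃ s : ℝ, t ≤ s ∧ z = L s := by
  obtain ⟨hline, hfwd, hbwd⟩ := hL
  set ε := (lA - 6 * δ) / 10 with hεdef
  have hε : 0 < ε := by rw [hεdef]; linarith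
  -- every point of the orbit of L t is within 2δ + ε of L
  have hFT : ∀ n : ℕ, ∃ σ : ℝ, dist ((A ^ n) (L t)) (L σ) ≤ 2 * δ + ε := by
    intro n
    have hMl : IsGeodesicLine (fun u => (A ^ n) (L u)) := by
      intro s u
      rw [(A ^ n).dist_eq]
      exact hline s u
    set dn := dist (L 0) ((A ^ n) (L 0)) with hdn
    have hMf : ∀ Mo : ℝ, ∃ N : ℝ, ∀ (m : ℕ) (u : ℝ), N ≤ (m : ℝ) → N ≤ u →
        Mo ≤ gromovProd ((A ^ m) (L 0)) ((fun u => (A ^ n) (L u)) u) (L 0) := by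
      intro Mo
      obtain ⟨N', hN'⟩ := hfwd (Mo + dn)
      refine ⟨|N'| + n + 1, fun m u hm hu => ?_⟩
      have hN'abs : N' ≤ |N'| := le_abs_self N'
      have hNnn : (0:ℝ) ≤ |N'| := abs_nonneg N'
      have hn_le_m : n + 1 ≤ m := by
        have : ((n:ℝ) + 1) ≤ m := by linarith
        exact_mod_cast this
      set k := m - n with hk
      have hmk : m = n + k := by omega
      have hcast : (k : ℝ) = (m : ℝ) - n := by
        rw [hk, Nat.cast_sub (by omega)]
      have key0 : (A ^ m) (L 0) = (A ^ n) ((A ^ k) (L 0)) := by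
        rw [hmk, pow_add]; rfl
      have iso : gromovProd ((A ^ m) (L 0)) ((A ^ n) (L u)) ((A ^ n) (L 0))
          = gromovProd ((A ^ k) (L 0)) (L u) (L 0) := by
        rw [key0]
        exact gromovProd_isom (A ^ n) _ _ _
      have base := gromovProd_base_change ((A ^ m) (L 0)) ((A ^ n) (L u)) (L 0) ((A ^ n) (L 0))
      have happ : Mo + dn ≤ gromovProd ((A ^ k) (L 0)) (L u) (L 0) := by
        refine hN' k u ?_ ?_
        · rw [hcast]
          have : ((n:ℝ)) ≤ m := by exact_mod_cast (by omega : n ≤ m)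
          linarith
        · have : (0:ℝ) ≤ (n:ℝ) := Nat.cast_nonneg n
          linarith
      rw [← iso] at happ
      show Mo ≤ gromovProd ((A ^ m) (L 0)) ((A ^ n) (L u)) (L 0)
      linarith
    have hMb : ∀ Mo : ℝ, ∃ N : ℝ, ∀ (m : ℕ) (u : ℝ), N ≤ (m : ℝ) → N ≤ u →
        Mo ≤ gromovProd ((A⁻¹ ^ m) (L 0)) ((fun u => (A ^ n) (L u)) (-u)) (L 0) := by
      intro Mo
      obtain ⟨N', hN'⟩ := hbwd (Mo + dn)
      refine ⟨|N'| + 1, fun m u hm hu => ?_⟩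
      have hN'abs : N' ≤ |N'| := le_abs_self N'
      have key0 : (A⁻¹ ^ m) (L 0) = (A ^ n) ((A⁻¹ ^ (m + n)) (L 0)) := by
        have hgp : (A ^ n) * (A⁻¹ ^ (m + n)) = A⁻¹ ^ m := by group
        rw [← hgp]; rfl
      have iso : gromovProd ((A⁻¹ ^ m) (L 0)) ((A ^ n) (L (-u))) ((A ^ n) (L 0))
          = gromovProd ((A⁻¹ ^ (m + n)) (L 0)) (L (-u)) (L 0) := by
        rw [key0]
        exact gromovProd_isom (A ^ n) _ _ _
      have base := gromovProd_base_change ((A⁻¹ ^ m) (L 0)) ((A ^ n) (L (-u))) (L 0)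
        ((A ^ n) (L 0))
      have happ : Mo + dn ≤ gromovProd ((A⁻¹ ^ (m + n)) (L 0)) (L (-u)) (L 0) := by
        refine hN' (m + n) u ?_ (by linarith [abs_nonneg N'])
        have h1 : (m : ℝ) ≤ ((m + n : ℕ) : ℝ) := by
          push_cast; linarith [Nat.cast_nonneg (α := ℝ) n]
        linarith [abs_nonneg N']
      rw [← iso] at happ
      show Mo ≤ gromovProd ((A⁻¹ ^ m) (L 0)) ((A ^ n) (L (-u))) (L 0)
      linarith
    obtain ⟨σ, hσ⟩ := close_to_line hδ hgeo hhyp A L (fun u => (A ^ n) (L u)) hline hMl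
      hfwd hbwd hMf hMb t hε
    exact ⟨σ, hσ⟩
  -- the sequence of fellow-traveling parameters
  set σf : ℕ → ℝ := fun n => if n = 0 then t else Classical.choose (hFT n) with hσf
  have hσ : ∀ n : ℕ, dist ((A ^ n) (L t)) (L (σf n)) ≤ 2 * δ + ε := by
    intro n
    by_cases h : n = 0
    · subst h
      have e : (A ^ 0) (L t) = L t := by rw [pow_zero]; rfl
      simp only [hσf, if_pos rfl, e, dist_self]
      linarith
    · simp only [hσf, if_neg h]
      exact Classical.choose_spec (hFT n)
  have hσ0 : σf 0 = t := by simp [hσf]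
  set D := dist (A (L t)) (L t) with hD
  set D₂ := dist (A (A (L t))) (L t) with hD₂
  obtain ⟨hDl, hD2l⟩ := stable_norm_le A x₀ (L t) hlA
  have hDn : ∀ n : ℕ, dist ((A ^ (n+1)) (L t)) ((A ^ n) (L t)) = D := by
    intro n
    have e : (A ^ (n+1)) (L t) = (A ^ n) (A (L t)) := by rw [pow_succ]; rfl
    rw [e, (A ^ n).dist_eq]
  have hDn2 : ∀ n : ℕ, dist ((A ^ (n+2)) (L t)) ((A ^ n) (L t)) = D₂ := by
    intro n
    have e : (A ^ (n+2)) (L t) = (A ^ n) (A (A (L t))) := by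
      rw [pow_add, pow_two]; rfl
    rw [e, (A ^ n).dist_eq]
  -- step estimates
  have hstepLow : ∀ n : ℕ, D - (4 * δ + 2 * ε) ≤ |σf (n+1) - σf n| := by
    intro n
    have e : |σf (n+1) - σf n| = dist (L (σf (n+1))) (L (σf n)) := (hline _ _).symm
    have t1 := dist_triangle ((A ^ (n+1)) (L t)) (L (σf (n+1))) ((A ^ n) (L t))
    have t2 := dist_triangle (L (σf (n+1))) (L (σf n)) ((A ^ n) (L t))
    have h1 := hσ (n+1)
    have h2 := hσ n
    have h2' : dist (L (σf n)) ((A ^ n) (L t)) = dist ((A ^ n) (L t)) (L (σf n)) :=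
      dist_comm _ _
    rw [e]
    have hd := hDn n
    linarith
  have hstepHigh : ∀ n : ℕ, |σf (n+1) - σf n| ≤ D + (4 * δ + 2 * ε) := by
    intro n
    have e : |σf (n+1) - σf n| = dist (L (σf (n+1))) (L (σf n)) := (hline _ _).symm
    have t1 := dist_triangle (L (σf (n+1))) ((A ^ (n+1)) (L t)) (L (σf n))
    have t2 := dist_triangle ((A ^ (n+1)) (L t)) ((A ^ n) (L t)) (L (σf n))
    have h1 := hσ (n+1)
    have h1' : dist (L (σf (n+1))) ((A ^ (n+1)) (L t)) = dist ((A ^ (n+1)) (L t)) (L (σf (n+1))) :=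
      dist_comm _ _
    have h2 := hσ n
    rw [e]
    have hd := hDn n
    linarith
  have h2stepLow : ∀ n : ℕ, D₂ - (4 * δ + 2 * ε) ≤ |σf (n+2) - σf n| := by
    intro n
    have e : |σf (n+2) - σf n| = dist (L (σf (n+2))) (L (σf n)) := (hline _ _).symm
    have t1 := dist_triangle ((A ^ (n+2)) (L t)) (L (σf (n+2))) ((A ^ n) (L t))
    have t2 := dist_triangle (L (σf (n+2))) (L (σf n)) ((A ^ n) (L t))
    have h1 := hσ (n+2)
    have h2 := hσ n
    have h2' : dist (L (σf n)) ((A ^ n) (L t)) = dist ((A ^ n) (L t)) (L (σf n)) :=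
      dist_comm _ _
    rw [e]
    have hd := hDn2 n
    linarith
  have hβpos : 0 < D - (4 * δ + 2 * ε) := by
    rw [hεdef]
    linarith
  -- no sign flips
  have noflip : ∀ n : ℕ, σf (n+1) - σf n < 0 → σf (n+2) - σf (n+1) < 0 := by
    intro n hneg
    by_contra hpos
    push_neg at hpos
    have b1 : D - (4 * δ + 2 * ε) ≤ σf (n+2) - σf (n+1) := by
      have := hstepLow (n+1)
      rw [abs_of_nonneg hpos] at this
      exact this
    have b2 : σf (n+2) - σf (n+1) ≤ D + (4 * δ + 2 * ε) := by
      have := hstepHigh (n+1)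
      rw [abs_of_nonneg hpos] at this
      exact this
    have b3 : σf (n+1) - σf n ≤ -(D - (4 * δ + 2 * ε)) := by
      have := hstepLow n
      rw [abs_of_neg hneg] at this
      linarith
    have b4 : -(D + (4 * δ + 2 * ε)) ≤ σf (n+1) - σf n := by
      have := hstepHigh n
      rw [abs_of_neg hneg] at this
      linarith
    have hsum : |σf (n+2) - σf n| ≤ 2 * (4 * δ + 2 * ε) := by
      rw [abs_le]
      constructor <;> nlinarith
    have := h2stepLow n
    rw [hεdef] at *
    nlinarith
  -- trichotomy on the first step
  rcases lt_trichotomy (σf 1 - σf 0) 0 with hneg | hzero | hposs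
  · -- all steps negative : contradiction with convergence to A⁺
    exfalso
    have hallneg : ∀ n : ℕ, σf (n+1) - σf n < 0 := by
      intro n
      induction n with
      | zero => exact hneg
      | succ n ih => exact noflip n ih
    set β := D - (4 * δ + 2 * ε) with hβ
    have hdesc : ∀ n : ℕ, σf n ≤ t - n * β := by
      intro n
      induction n with
      | zero => simp [hσ0]
      | succ n ih =>
        have h1 := hstepLow n
        have h2 := hallneg n
        rw [abs_of_neg h2] at h1
        push_cast
        nlinarith
    set K := dist (L 0) (L t) + (2 * δ + ε) with hK
    obtain ⟨N, hN⟩ := hfwd (K + 1)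
    set n₀ : ℕ := ⌈max N (t / β)⌉₊ + 1 with hn₀
    have hceil : max N (t / β) ≤ (⌈max N (t / β)⌉₊ : ℝ) := Nat.le_ceil _
    have hn₀N : N ≤ (n₀ : ℝ) := by
      have : ((⌈max N (t / β)⌉₊ : ℝ)) ≤ n₀ := by
        rw [hn₀]; push_cast; linarith
      linarith [le_max_left N (t / β)]
    have hσn₀ : σf n₀ ≤ 0 := by
      have h1 := hdesc n₀
      have h2 : t / β ≤ (n₀ : ℝ) := by
        have : ((⌈max N (t / β)⌉₊ : ℝ)) ≤ n₀ := by
          rw [hn₀]; push_cast; linarith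
        linarith [le_max_right N (t / β)]
      have h3 : t ≤ (n₀ : ℝ) * β := by
        rw [div_le_iff₀ hβpos] at h2
        linarith
      linarith
    set u := max N 0 with hu
    have happ := hN n₀ u hn₀N (le_max_left _ _)
    have hlip := gromovProd_le_add_dist ((A ^ n₀) (L 0)) (L (σf n₀)) (L u) (L 0)
    have hd1 : dist ((A ^ n₀) (L 0)) (L (σf n₀)) ≤ dist (L 0) (L t) + (2 * δ + ε) := by
      have t1 := dist_triangle ((A ^ n₀) (L 0)) ((A ^ n₀) (L t)) (L (σf n₀))
      have e1 : dist ((A ^ n₀) (L 0)) ((A ^ n₀) (L t)) = dist (L 0) (L t) :=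
        (A ^ n₀).dist_eq _ _
      have := hσ n₀
      linarith
    have hu0 : (0:ℝ) ≤ u := le_max_right _ _
    have hzero : gromovProd (L (σf n₀)) (L u) (L 0) = 0 := by
      show (dist (L 0) (L (σf n₀)) + dist (L 0) (L u) - dist (L (σf n₀)) (L u)) / 2 = 0
      rw [hline, hline, hline]
      rw [abs_of_nonneg (by linarith : (0:ℝ) ≤ 0 - σf n₀)]
      rw [abs_of_nonpos (by linarith : (0:ℝ) - u ≤ 0)]
      rw [abs_of_nonpos (by linarith : σf n₀ - u ≤ 0)]
      ring
    rw [hzero] at hlip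
    linarith
  · -- first step zero : impossible
    exfalso
    have := hstepLow 0
    rw [hzero, abs_zero] at this
    linarith
  · -- first step positive : the projection is ahead of t
    obtain ⟨s₀, hs₀⟩ := hz
    refine ⟨s₀, ?_, hs₀.symm⟩
    by_contra hts
    push_neg at hts
    have hσ1 : dist (A (L t)) (L (σf 1)) ≤ 2 * δ + ε := by
      have := hσ 1
      have e : (A ^ 1) (L t) = A (L t) := by rw [pow_one]
      rwa [e] at this
    have hσ1t : t + (D - (2 * δ + ε)) ≤ σf 1 := by
      have t1 := dist_triangle (A (L t)) (L (σf 1)) (L t)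
      have e : dist (L (σf 1)) (L t) = |σf 1 - t| := hline _ _
      have habs : |σf 1 - t| = σf 1 - t := by
        rw [abs_of_pos]
        rw [hσ0] at hposs
        linarith
      rw [e, habs] at t1
      linarith
    have hp : dist (A (L t)) z ≤ 2 * δ + ε := by
      rw [hproj]
      exact le_trans (infDist_le_dist_of_mem ⟨σf 1, rfl⟩) hσ1
    have hs₀σ1 : σf 1 - s₀ ≤ (2 * δ + ε) + (2 * δ + ε) := by
      have e : dist (L (σf 1)) (L s₀) = |σf 1 - s₀| := hline _ _
      have t1 := dist_triangle (L (σf 1)) (A (L t)) (L s₀)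
      have e2 : dist (L (σf 1)) (A (L t)) = dist (A (L t)) (L (σf 1)) := dist_comm _ _
      have e3 : dist (A (L t)) (L s₀) = dist (A (L t)) z := by rw [hs₀]
      rw [e, e2, e3] at t1
      have := le_abs_self (σf 1 - s₀)
      linarith
    rw [hεdef] at *
    nlinarith
end
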